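/- The Star Hydra is simulated by the star game: →_SH ⊆ ▷+, where ▷ is the Star rewrite relation over the signature S' = S ∪ {⊥} with the given well-founded precedence < (extended by ⊥ below all elements of S). That is, whenever s →_SH t for trees labeled over S, there is a nonempty ▷ reduction from s to t. -/

import Mathlib

namespace StarGames

/-- Unranked terms over signature `σ` and variables `X`. -/
inductive Term (σ : Type) (X : Type) : Type
  | var : X → Term σ X
  | app : σ → List (Term σ X) → Term σ X

variable {σ σ' X : Type}

/-- Relabeling of symbols. -/
def Term.relabel (h : σ → σ') : Term σ X → Term σ' X
  | .var x => .var x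
  | .app f ts => .app (h f) (ts.attach.map fun ⟨t, _⟩ => t.relabel h)
decreasing_by
  have := List.sizeOf_lt_of_mem ‹_ ∈ ts›
  simp only [Term.app.sizeOf_spec]
  omega

/-- Closure of a root-step relation under contexts (rewriting inside one argument). -/
inductive Rewrite (R : Term σ X → Term σ X → Prop) : Term σ X → Term σ X → Prop
  | root {s t : Term σ X} : R s t → Rewrite R s t
  | congr {s t : Term σ X} (f : σ) (pre post : List (Term σ X)) :
      Rewrite R s t →
      Rewrite R (Term.app f (pre ++ s :: post)) (Term.app f (pre ++ t :: post))

/-- Root steps of the swap TRS:  f(u⃗,x,y,w⃗) → f(u⃗,y,x,w⃗). -/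
inductive SwapRoot : Term σ X → Term σ X → Prop
  | swap (f : σ) (us : List (Term σ X)) (x y : Term σ X) (ws : List (Term σ X)) :
      SwapRoot (Term.app f (us ++ x :: y :: ws)) (Term.app f (us ++ y :: x :: ws))

/-- One swap step, anywhere in a term. -/
def SwapStep : Term σ X → Term σ X → Prop := Rewrite (SwapRoot (σ := σ) (X := X))

/-- `≃` : the equivalence relation generated by swap steps. -/
def TermEquiv : Term σ X → Term σ X → Prop := Relation.EqvGen SwapStep

def treeSetoid (σ X : Type) : Setoid (Term σ X) :=
  ⟨TermEquiv, Relation.EqvGen.is_equivalence _⟩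

/-- (Unordered) trees: terms modulo permutation of arguments. -/
def Tree (σ X : Type) := Quotient (treeSetoid σ X)

def Tree.mk (t : Term σ X) : Tree σ X := Quotient.mk (treeSetoid σ X) t

/-- Rewrite relation induced on trees by a root-step relation. -/
def TreeRel (R : Term σ X → Term σ X → Prop) : Tree σ X → Tree σ X → Prop :=
  fun a b => ∃ s t : Term σ X, a = Tree.mk s ∧ b = Tree.mk t ∧ Rewrite R s t

/-- Terms all of whose symbols satisfy `p`. -/
inductive Uses (p : σ → Prop) : Term σ X → Prop
  | var (x : X) : Uses p (Term.var x)
  | app (f : σ) (ts : List (Term σ X)) :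
      p f → (∀ t ∈ ts, Uses p t) → Uses p (Term.app f ts)

end StarGames

namespace StarGames

/-- Markings for the Star Hydra setting: plain symbols `s`, underlined symbols
`s̲`, and starred symbols `s⋆`. -/
inductive Mark3 : Type
  | plain : Mark3
  | ul : Mark3
  | star : Mark3

variable {S : Type}

/-- The label set `S' = S ∪ {⊥}`: `some a` is `a ∈ S`, `none` is the fresh
element `⊥` below all elements of `S`. -/
abbrev SBot (S : Type) : Type := Option S

/-- The well-founded order on `S' = S ∪ {⊥}` extending `<` by `⊥` below all
elements of `S`. -/
def ltBot (lt : S → S → Prop) : SBot S → SBot S → Prop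
  | none, some _ => True
  | some a, some b => lt a b
  | _, _ => False

/-- The Star Hydra signature: symbols of `S'`, possibly underlined or starred. -/
abbrev HSig (S : Type) : Type := SBot S × Mark3

/-- Root steps of the TRS `Star` over `S'` (with its marked copies). -/
inductive StarHRoot (lt : S → S → Prop) : Term (HSig S) Empty → Term (HSig S) Empty → Prop
  | put (f : SBot S) (ts : List (Term (HSig S) Empty)) :
      StarHRoot lt (.app (f, Mark3.plain) ts) (.app (f, Mark3.star) ts)
  | select (f : SBot S) (xs : List (Term (HSig S) Empty)) (y : Term (HSig S) Empty)
      (zs : List (Term (HSig S) Empty)) :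
      StarHRoot lt (.app (f, Mark3.star) (xs ++ y :: zs)) y
  | copy (f g : SBot S) (k : ℕ) (ts : List (Term (HSig S) Empty)) :
      ltBot lt g f →
      StarHRoot lt (.app (f, Mark3.star) ts)
        (.app (g, Mark3.plain) (List.replicate k (Term.app (f, Mark3.star) ts)))
  | down (f g : SBot S) (k : ℕ) (xs ys zs : List (Term (HSig S) Empty)) :
      StarHRoot lt (.app (f, Mark3.star) (xs ++ Term.app (g, Mark3.plain) ys :: zs))
        (.app (f, Mark3.plain)
          (xs ++ List.replicate k (Term.app (g, Mark3.star) ys) ++ zs))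

/-- Root steps of the garbage-collection relation `↪_g`:
`n(x⃗, y₁, …, y_h) ↪_g n̲(x⃗)` for every `h ≥ g`. -/
inductive GRoot (g : ℕ) : Term (HSig S) Empty → Term (HSig S) Empty → Prop
  | gc (n : SBot S) (xs ys : List (Term (HSig S) Empty)) :
      g ≤ ys.length →
      GRoot g (.app (n, Mark3.plain) (xs ++ ys)) (.app (n, Mark3.ul) xs)

/-- Remove underlining from a mark. -/
def Mark3.dropUL : Mark3 → Mark3
  | Mark3.ul => Mark3.plain
  | m => m

/-- `[t]`: the term `t` with all underlining removed. -/
def dropUnderline (t : Term (HSig S) Empty) : Term (HSig S) Empty :=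
  t.relabel (fun a : HSig S => (a.1, a.2.dropUL))

/-- A tree labeled over `S'`: no underlined and no marked (starred) symbols. -/
def PlainTerm : Term (HSig S) Empty → Prop :=
  Uses (fun a : HSig S => a.2 = Mark3.plain)

/-- A tree labeled over `S`: plain marks and no occurrence of `⊥`. -/
def SPlainTerm : Term (HSig S) Empty → Prop :=
  Uses (fun a : HSig S => a.2 = Mark3.plain ∧ a.1 ≠ none)

/-- `R^!`: a maximal `R`-reduction, i.e. `x R* y` with `y` an `R`-normal form. -/
def MaxRed {α : Type*} (R : α → α → Prop) (a b : α) : Prop :=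
  Relation.ReflTransGen R a b ∧ ∀ c : α, ¬ R b c

/-- `s⋆`: the term `s` with its root symbol marked. -/
def rootStar : Term (HSig S) Empty → Term (HSig S) Empty
  | Term.var x => Term.var x
  | Term.app a ts => Term.app (a.1, Mark3.star) ts

/-- Root steps of the Star Hydra rule (chop):
`n(α, x⃗) → n̲(β̲₁, …, β̲ₖ, x⃗)` for `k ≥ 0` and `β₁, …, βₖ < α`, where `α`
labels a leaf. -/
inductive ChopRoot (lt : S → S → Prop) : Term (HSig S) Empty → Term (HSig S) Empty → Prop
  | chop (n α : SBot S) (βs : List (SBot S)) (xs : List (Term (HSig S) Empty)) :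
      (∀ β ∈ βs, ltBot lt β α) →
      ChopRoot lt
        (.app (n, Mark3.plain) (Term.app (α, Mark3.plain) [] :: xs))
        (.app (n, Mark3.ul)
          ((βs.map fun β => Term.app (β, Mark3.ul) ([] : List (Term (HSig S) Empty))) ++ xs))

/-- Root steps of the Star Hydra rule (propagate):
`n(m̲(x⃗), y⃗) → n̲(m̲(x⃗), y⃗)`. -/
inductive PropagateRoot : Term (HSig S) Empty → Term (HSig S) Empty → Prop
  | propagate (n m : SBot S) (xs ys : List (Term (HSig S) Empty)) :
      PropagateRoot
        (.app (n, Mark3.plain) (Term.app (m, Mark3.ul) xs :: ys))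
        (.app (n, Mark3.ul) (Term.app (m, Mark3.ul) xs :: ys))

/-- Root steps of the Star Hydra rule (widen):
`n̲(m̲(x⃗), y⃗) → n̲(m̲(x⃗), …, m̲(x⃗), y⃗)` with `0` or more copies. -/
inductive WidenRoot : Term (HSig S) Empty → Term (HSig S) Empty → Prop
  | widen (n m : SBot S) (k : ℕ) (xs ys : List (Term (HSig S) Empty)) :
      WidenRoot
        (.app (n, Mark3.ul) (Term.app (m, Mark3.ul) xs :: ys))
        (.app (n, Mark3.ul) (List.replicate k (Term.app (m, Mark3.ul) xs) ++ ys))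

/-- Root steps of the Star Hydra rule (lengthen):
`n̲(x⃗) → m̲(n̲(x⃗))` provided `m < n`. -/
inductive LengthenRoot (lt : S → S → Prop) : Term (HSig S) Empty → Term (HSig S) Empty → Prop
  | lengthen (n m : SBot S) (xs : List (Term (HSig S) Empty)) :
      ltBot lt m n →
      LengthenRoot lt
        (.app (n, Mark3.ul) xs)
        (.app (m, Mark3.ul) [Term.app (n, Mark3.ul) xs])

/-- Root steps of the Star Hydra rule (waive): `m̲(x⃗) → m(x⃗)`. -/
inductive WaiveRoot : Term (HSig S) Empty → Term (HSig S) Empty → Prop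
  | waive (m : SBot S) (xs : List (Term (HSig S) Empty)) :
      WaiveRoot (.app (m, Mark3.ul) xs) (.app (m, Mark3.plain) xs)

/-- The Star Hydra rewrite relation
`→_SH = →_chop · →_propagate^! · (→_widen ∪ →_lengthen)* · →_waive^!` on trees. -/
def SHRel (lt : S → S → Prop) : Tree (HSig S) Empty → Tree (HSig S) Empty → Prop :=
  fun a b =>
    ∃ c d e : Tree (HSig S) Empty,
      TreeRel (ChopRoot lt) a c ∧
      MaxRed (TreeRel PropagateRoot) c d ∧
      Relation.ReflTransGen
        (fun x y => TreeRel WidenRoot x y ∨ TreeRel (LengthenRoot lt) x y) d e ∧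
      MaxRed (TreeRel WaiveRoot) e b

end StarGames

namespace StarGames
/-! ### Auxiliary machinery for the simulation proof -/

section Toolkit

variable {σ X : Type}

lemma Term.exists_app (t : Term σ Empty) : ∃ f ts, t = Term.app f ts := by
  cases t with
  | var x => exact x.elim
  | app f ts => exact ⟨f, ts, rfl⟩

lemma SwapRoot.symm {s t : Term σ X} (h : SwapRoot s t) : SwapRoot t s := by
  cases h with
  | swap f us x y ws => exact SwapRoot.swap f us y x ws

lemma SwapStep.symm {s t : Term σ X} (h : SwapStep s t) : SwapStep t s := by
  induction h with
  | root h => exact Rewrite.root h.symm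
  | congr f pre post _ ih => exact Rewrite.congr f pre post ih

lemma TermEquiv.refl (t : Term σ X) : TermEquiv t t := Relation.EqvGen.refl t

lemma TermEquiv.symm {s t : Term σ X} (h : TermEquiv s t) : TermEquiv t s :=
  Relation.EqvGen.symm _ _ h

lemma TermEquiv.trans {s t u : Term σ X} (h1 : TermEquiv s t) (h2 : TermEquiv t u) :
    TermEquiv s u := Relation.EqvGen.trans _ _ _ h1 h2

lemma TermEquiv.of_step {s t : Term σ X} (h : SwapStep s t) : TermEquiv s t :=
  Relation.EqvGen.rel _ _ h

lemma TermEquiv.ctx (f : σ) (pre post : List (Term σ X)) {s t : Term σ X}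
    (h : TermEquiv s t) :
    TermEquiv (Term.app f (pre ++ s :: post)) (Term.app f (pre ++ t :: post)) := by
  induction h with
  | rel a b hab => exact Relation.EqvGen.rel _ _ (Rewrite.congr f pre post hab)
  | refl a => exact TermEquiv.refl _
  | symm a b _ ih => exact ih.symm
  | trans a b c _ _ ih1 ih2 => exact ih1.trans ih2

lemma TermEquiv.of_perm_aux {l l' : List (Term σ X)} (h : l.Perm l') :
    ∀ (f : σ) (pre : List (Term σ X)),
      TermEquiv (Term.app f (pre ++ l)) (Term.app f (pre ++ l')) := by
  induction h with
  | nil => intro f pre; exact TermEquiv.refl _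
  | cons x h ih =>
      intro f pre
      have := ih f (pre ++ [x])
      simpa [List.append_assoc] using this
  | swap x y l =>
      intro f pre
      exact Relation.EqvGen.rel _ _ (Rewrite.root (SwapRoot.swap f pre y x l))
  | trans h1 h2 ih1 ih2 => intro f pre; exact (ih1 f pre).trans (ih2 f pre)

lemma TermEquiv.of_perm (f : σ) {l l' : List (Term σ X)} (h : l.Perm l') :
    TermEquiv (Term.app f l) (Term.app f l') := by
  simpa using TermEquiv.of_perm_aux h f []

lemma forall₂_te_refl (l : List (Term σ X)) : List.Forall₂ TermEquiv l l := by
  induction l with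
  | nil => exact List.Forall₂.nil
  | cons a l ih => exact List.Forall₂.cons (TermEquiv.refl a) ih

lemma forall₂_te_trans {xs ys zs : List (Term σ X)}
    (h1 : List.Forall₂ TermEquiv xs ys) (h2 : List.Forall₂ TermEquiv ys zs) :
    List.Forall₂ TermEquiv xs zs := by
  induction h1 generalizing zs with
  | nil => cases h2; exact List.Forall₂.nil
  | cons h hl ih =>
      cases h2 with
      | cons h' hl' => exact List.Forall₂.cons (h.trans h') (ih hl')

lemma forall₂_te_symm {xs ys : List (Term σ X)}
    (h : List.Forall₂ TermEquiv xs ys) : List.Forall₂ TermEquiv ys xs := by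
  induction h with
  | nil => exact List.Forall₂.nil
  | cons h hl ih => exact List.Forall₂.cons h.symm ih

lemma forall₂_mem_right {R : Term σ X → Term σ X → Prop} {as bs : List (Term σ X)}
    (h : List.Forall₂ R as bs) {b : Term σ X} (hb : b ∈ bs) : ∃ a ∈ as, R a b := by
  induction h with
  | nil => cases hb
  | cons h hl ih =>
      rcases List.mem_cons.mp hb with rfl | hb'
      · exact ⟨_, List.mem_cons_self, h⟩
      · obtain ⟨a, ha, hr⟩ := ih hb'
        exact ⟨a, List.mem_cons_of_mem _ ha, hr⟩

/-- Commuting permutations past pointwise equivalence. -/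
lemma forall₂_perm_right {R : Term σ X → Term σ X → Prop} {zs ys : List (Term σ X)}
    (h : zs.Perm ys) :
    ∀ {xs : List (Term σ X)}, List.Forall₂ R xs zs → ∃ ws, xs.Perm ws ∧ List.Forall₂ R ws ys := by
  induction h with
  | nil => intro xs h2; cases h2; exact ⟨[], List.Perm.refl _, List.Forall₂.nil⟩
  | cons a h ih =>
      intro xs h2
      cases h2 with
      | cons hx hxs =>
          obtain ⟨ws, hp, hf⟩ := ih hxs
          exact ⟨_ :: ws, hp.cons _, hf.cons hx⟩
  | swap x y l =>
      intro xs h2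
      cases h2 with
      | cons hu h2' =>
          cases h2' with
          | cons hv hl =>
              exact ⟨_ :: _ :: _, List.Perm.swap _ _ _, (hl.cons hu).cons hv⟩
  | trans h1 h2 ih1 ih2 =>
      intro xs hx
      obtain ⟨ws1, hp1, hf1⟩ := ih1 hx
      obtain ⟨ws2, hp2, hf2⟩ := ih2 hf1
      exact ⟨ws2, hp1.trans hp2, hf2⟩

lemma forall₂_perm_left {R : Term σ X → Term σ X → Prop} {xs zs : List (Term σ X)}
    (h : xs.Perm zs) :
    ∀ {ys : List (Term σ X)}, List.Forall₂ R zs ys → ∃ ws, List.Forall₂ R xs ws ∧ ws.Perm ys := by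
  induction h with
  | nil => intro ys h2; cases h2; exact ⟨[], List.Forall₂.nil, List.Perm.refl _⟩
  | cons a h ih =>
      intro ys h2
      cases h2 with
      | cons hx hxs =>
          obtain ⟨ws, hf, hp⟩ := ih hxs
          exact ⟨_ :: ws, hf.cons hx, hp.cons _⟩
  | swap x y l =>
      intro ys h2
      cases h2 with
      | cons hu h2' =>
          cases h2' with
          | cons hv hl =>
              exact ⟨_ :: _ :: _, (hl.cons hu).cons hv, List.Perm.swap _ _ _⟩
  | trans h1 h2 ih1 ih2 =>
      intro ys hy
      obtain ⟨ws2, hf2, hp2⟩ := ih2 hy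
      obtain ⟨ws1, hf1, hp1⟩ := ih1 hf2
      exact ⟨ws1, hf1, hp1.trans hp2⟩

/-- List equivalence: pointwise `TermEquiv` composed with a permutation. -/
def LEq (xs ys : List (Term σ X)) : Prop :=
  ∃ zs, List.Forall₂ TermEquiv xs zs ∧ zs.Perm ys

lemma LEq.refl (xs : List (Term σ X)) : LEq xs xs :=
  ⟨xs, forall₂_te_refl xs, List.Perm.refl xs⟩

lemma LEq.of_perm {xs ys : List (Term σ X)} (h : xs.Perm ys) : LEq xs ys :=
  ⟨xs, forall₂_te_refl xs, h⟩

lemma LEq.of_forall₂ {xs ys : List (Term σ X)} (h : List.Forall₂ TermEquiv xs ys) : LEq xs ys :=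
  ⟨ys, h, List.Perm.refl ys⟩

lemma LEq.trans {xs ys zs : List (Term σ X)} (h1 : LEq xs ys) (h2 : LEq ys zs) : LEq xs zs := by
  obtain ⟨z1, F1, P1⟩ := h1
  obtain ⟨z2, F2, P2⟩ := h2
  obtain ⟨ws, Fw, Pw⟩ := forall₂_perm_left P1 F2
  exact ⟨ws, forall₂_te_trans F1 Fw, Pw.trans P2⟩

lemma LEq.symm {xs ys : List (Term σ X)} (h : LEq xs ys) : LEq ys xs := by
  obtain ⟨zs, F, P⟩ := h
  obtain ⟨ws, Fw, Pw⟩ := forall₂_perm_left P.symm (forall₂_te_symm F)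
  exact ⟨ws, Fw, Pw⟩

lemma LEq.cons {a b : Term σ X} {xs ys : List (Term σ X)} (h : TermEquiv a b)
    (hl : LEq xs ys) : LEq (a :: xs) (b :: ys) := by
  obtain ⟨zs, F, P⟩ := hl
  exact ⟨b :: zs, F.cons h, P.cons b⟩

lemma LEq.append {xs ys us vs : List (Term σ X)} (h1 : LEq xs ys) (h2 : LEq us vs) :
    LEq (xs ++ us) (ys ++ vs) := by
  obtain ⟨z1, F1, P1⟩ := h1
  obtain ⟨z2, F2, P2⟩ := h2
  exact ⟨z1 ++ z2, List.rel_append F1 F2, P1.append P2⟩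

lemma LEq.perm_right {xs ys zs : List (Term σ X)} (h : LEq xs ys) (p : ys.Perm zs) :
    LEq xs zs := by
  obtain ⟨z, F, P⟩ := h
  exact ⟨z, F, P.trans p⟩

lemma LEq.perm_left {xs ys zs : List (Term σ X)} (p : xs.Perm ys) (h : LEq ys zs) :
    LEq xs zs := (LEq.of_perm p).trans h

lemma termEquiv_of_forall₂_aux {xs zs : List (Term σ X)} (h : List.Forall₂ TermEquiv xs zs) :
    ∀ (f : σ) (pre : List (Term σ X)),
      TermEquiv (Term.app f (pre ++ xs)) (Term.app f (pre ++ zs)) := by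
  induction h with
  | nil => intro f pre; exact TermEquiv.refl _
  | @cons a b l1 l2 hab hl ih =>
      intro f pre
      refine (TermEquiv.ctx f pre l1 hab).trans ?_
      have := ih f (pre ++ [b])
      simpa [List.append_assoc] using this

lemma TermEquiv.of_LEq (f : σ) {xs ys : List (Term σ X)} (h : LEq xs ys) :
    TermEquiv (Term.app f xs) (Term.app f ys) := by
  obtain ⟨zs, F, P⟩ := h
  have h1 := termEquiv_of_forall₂_aux F f []
  simp only [List.nil_append] at h1
  exact h1.trans (TermEquiv.of_perm f P)

lemma swapStep_app_inv {f : σ} {L : List (Term σ X)} {u : Term σ X}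
    (h : SwapStep (Term.app f L) u) : ∃ M, u = Term.app f M ∧ LEq L M := by
  cases h with
  | root hr =>
      cases hr with
      | swap g us x y ws =>
          exact ⟨_, rfl, LEq.of_perm ((List.Perm.refl us).append (List.Perm.swap x y ws).symm)⟩
  | congr g pre post h' =>
      refine ⟨_, rfl, LEq.of_forall₂ ?_⟩
      exact List.rel_append (forall₂_te_refl pre) (List.Forall₂.cons (TermEquiv.of_step h') (forall₂_te_refl post))

lemma termEquiv_app_inv' {t u : Term σ X} (h : TermEquiv t u) :
    (∀ f L, t = Term.app f L → ∃ M, u = Term.app f M ∧ LEq L M) ∧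
    (∀ f L, u = Term.app f L → ∃ M, t = Term.app f M ∧ LEq L M) := by
  induction h with
  | rel a b hab =>
      constructor
      · intro f L hL; subst hL; exact swapStep_app_inv hab
      · intro f L hL; subst hL; exact swapStep_app_inv hab.symm
  | refl a =>
      exact ⟨fun f L hL => ⟨L, hL, LEq.refl L⟩, fun f L hL => ⟨L, hL, LEq.refl L⟩⟩
  | symm a b _ ih => exact ⟨ih.2, ih.1⟩
  | trans a b c _ _ ih1 ih2 =>
      constructor
      · intro f L hL
        obtain ⟨M, hM, hLM⟩ := ih1.1 f L hL
        obtain ⟨N, hN, hMN⟩ := ih2.1 f M hM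
        exact ⟨N, hN, hLM.trans hMN⟩
      · intro f L hL
        obtain ⟨M, hM, hLM⟩ := ih2.2 f L hL
        obtain ⟨N, hN, hMN⟩ := ih1.2 f M hM
        exact ⟨N, hN, hLM.trans hMN⟩

lemma TermEquiv.app_inv {f : σ} {L : List (Term σ X)} {u : Term σ X}
    (h : TermEquiv (Term.app f L) u) : ∃ M, u = Term.app f M ∧ LEq L M :=
  (termEquiv_app_inv' h).1 f L rfl

lemma Uses.of_equiv {p : σ → Prop} {t u : Term σ Empty} (ht : Uses p t)
    (h : TermEquiv t u) : Uses p u := by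
  induction ht generalizing u with
  | var x => exact x.elim
  | app f ts hf hts ih =>
      obtain ⟨M, rfl, hLM⟩ := h.app_inv
      refine Uses.app f M hf ?_
      intro m hm
      obtain ⟨zs, F, P⟩ := hLM
      have hmz : m ∈ zs := P.mem_iff.mpr hm
      obtain ⟨a, ha, hae⟩ := forall₂_mem_right F hmz
      exact ih a ha hae

end Toolkit

section ListToolkit

variable {α : Type*}

lemma forall₂_append_inv_left {R : α → α → Prop} {A B zs : List α}
    (h : List.Forall₂ R (A ++ B) zs) :
    ∃ zA zB, zs = zA ++ zB ∧ List.Forall₂ R A zA ∧ List.Forall₂ R B zB := by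
  induction A generalizing zs with
  | nil => exact ⟨[], zs, rfl, List.Forall₂.nil, h⟩
  | cons a A ih =>
      cases h with
      | cons ha hl =>
          obtain ⟨zA, zB, rfl, h1, h2⟩ := ih hl
          exact ⟨_ :: zA, zB, rfl, List.Forall₂.cons ha h1, h2⟩

lemma perm_cons_cases {l l₁ l₂ : List α} {x y : α}
    (h1 : l.Perm (x :: l₁)) (h2 : l.Perm (y :: l₂)) :
    (x = y ∧ l₁.Perm l₂) ∨ ∃ r, l₁.Perm (y :: r) ∧ l₂.Perm (x :: r) := by
  classical
  by_cases hxy : x = y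
  · subst hxy; left; exact ⟨rfl, (h1.symm.trans h2).cons_inv⟩
  · right
    have hp : (x :: l₁).Perm (y :: l₂) := h1.symm.trans h2
    have hy : y ∈ l₁ := by
      have : y ∈ x :: l₁ := hp.mem_iff.mpr (List.mem_cons_self)
      rcases List.mem_cons.mp this with h | h
      · exact absurd h.symm hxy
      · exact h
    obtain ⟨a, b, rfl⟩ := List.append_of_mem hy
    refine ⟨a ++ b, List.perm_middle, ?_⟩
    have step : (x :: (a ++ y :: b)).Perm (x :: y :: (a ++ b)) :=
      List.perm_middle.cons x
    have sw : (x :: y :: (a ++ b)).Perm (y :: x :: (a ++ b)) := List.Perm.swap y x _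
    exact (hp.symm.trans (step.trans sw)).cons_inv

lemma perm_extract_of_pred {P : α → Prop} {x : α} {X A B : List α}
    (h : (x :: X).Perm (A ++ B)) (hA : ∀ a ∈ A, P a) (hx : ¬ P x) :
    ∃ B', B.Perm (x :: B') ∧ X.Perm (A ++ B') := by
  have hxm : x ∈ A ++ B := h.mem_iff.mp (List.mem_cons_self)
  have hxB : x ∈ B := by
    rcases List.mem_append.mp hxm with h' | h'
    · exact absurd (hA x h') hx
    · exact h'
  obtain ⟨p, q, rfl⟩ := List.append_of_mem hxB
  refine ⟨p ++ q, List.perm_middle, ?_⟩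
  have h' : (x :: X).Perm (x :: (A ++ (p ++ q))) := by
    refine h.trans ?_
    have := List.perm_middle (l₁ := A ++ p) (a := x) (l₂ := q)
    simpa [List.append_assoc] using this
  exact h'.cons_inv

end ListToolkit

section HydraDefs

variable {S : Type}

lemma plain_app_inv {f : HSig S} {ts : List (Term (HSig S) Empty)}
    (h : PlainTerm (Term.app f ts)) : f.2 = Mark3.plain ∧ ∀ t ∈ ts, PlainTerm t := by
  cases h with
  | app f ts hf hts => exact ⟨hf, hts⟩

lemma plain_app {f : SBot S} {ts : List (Term (HSig S) Empty)}
    (hts : ∀ t ∈ ts, PlainTerm t) : PlainTerm (Term.app (f, Mark3.plain) ts) :=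
  Uses.app _ _ rfl hts

lemma not_plain_ul {n : SBot S} {cs : List (Term (HSig S) Empty)} :
    ¬ PlainTerm (Term.app (n, Mark3.ul) cs) := by
  intro h
  exact Mark3.noConfusion (plain_app_inv h).1

lemma splain_plain {t : Term (HSig S) Empty} (h : SPlainTerm t) : PlainTerm t := by
  induction h with
  | var x => exact x.elim
  | app f ts hf _ ih => exact Uses.app f ts hf.1 ih

lemma te_root_eq {f g : HSig S} {L M : List (Term (HSig S) Empty)}
    (h : TermEquiv (Term.app f L) (Term.app g M)) : f = g := by
  obtain ⟨M', hM, _⟩ := h.app_inv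
  exact (Term.app.injEq _ _ _ _ ▸ hM) |>.1.symm

lemma leq_nil {M : List (Term (HSig S) Empty)} (h : LEq ([] : List (Term (HSig S) Empty)) M) :
    M = [] := by
  obtain ⟨zs, F, P⟩ := h
  cases F
  exact P.nil_eq.symm

/-- `b` is an underlined leaf with label strictly below `α`. -/
def ULLeafLt (lt : S → S → Prop) (α : SBot S) (b : Term (HSig S) Empty) : Prop :=
  ∃ β, ltBot lt β α ∧ b = Term.app (β, Mark3.ul) []

/-- Trees with all labels strictly below `α`, plain marks. -/
inductive SmallTree (lt : S → S → Prop) (α : SBot S) : Term (HSig S) Empty → Prop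
  | mk (γ : SBot S) (ts : List (Term (HSig S) Empty)) :
      ltBot lt γ α → (∀ t ∈ ts, SmallTree lt α t) →
      SmallTree lt α (Term.app (γ, Mark3.plain) ts)

/-- What an underlined region can generate via (widen ∪ lengthen)* ; waive^!. -/
inductive MGen (lt : S → S → Prop) : Term (HSig S) Empty → Term (HSig S) Empty → Prop
  | refl {u v : Term (HSig S) Empty} : TermEquiv u v → PlainTerm v → MGen lt u v
  | nodeNil (n : SBot S) :
      MGen lt (Term.app (n, Mark3.ul) []) (Term.app (n, Mark3.plain) [])
  | nodePlain {n : SBot S} {cs cs₀ L : List (Term (HSig S) Empty)}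
      {c c' : Term (HSig S) Empty} :
      cs.Perm (c :: cs₀) → PlainTerm c → TermEquiv c c' →
      MGen lt (Term.app (n, Mark3.ul) cs₀) (Term.app (n, Mark3.plain) L) →
      MGen lt (Term.app (n, Mark3.ul) cs) (Term.app (n, Mark3.plain) (c' :: L))
  | nodeUL {n m : SBot S} {cs cs₀ L K xs : List (Term (HSig S) Empty)} :
      cs.Perm (Term.app (m, Mark3.ul) xs :: cs₀) →
      (∀ w ∈ K, MGen lt (Term.app (m, Mark3.ul) xs) w) →
      MGen lt (Term.app (n, Mark3.ul) cs₀) (Term.app (n, Mark3.plain) L) →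
      MGen lt (Term.app (n, Mark3.ul) cs) (Term.app (n, Mark3.plain) (K ++ L))
  | up {n m : SBot S} {K cs : List (Term (HSig S) Empty)} : ltBot lt m n →
      (∀ w ∈ K, MGen lt (Term.app (n, Mark3.ul) cs) w) →
      MGen lt (Term.app (n, Mark3.ul) cs) (Term.app (m, Mark3.plain) K)

/-- Underlined-region shape: plain below plain (and no stars). -/
inductive Shape : Term (HSig S) Empty → Prop
  | plainT {u : Term (HSig S) Empty} : PlainTerm u → Shape u
  | ulNode (n : SBot S) (cs : List (Term (HSig S) Empty)) :
      (∀ c ∈ cs, Shape c) → Shape (Term.app (n, Mark3.ul) cs)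

/-- State after chop and possibly-partial propagation. -/
inductive Post (lt : S → S → Prop) : Term (HSig S) Empty → Term (HSig S) Empty → Prop
  | chopped {n α : SBot S} {rest extras cs₀ cs : List (Term (HSig S) Empty)} :
      cs₀.Perm (Term.app (α, Mark3.plain) [] :: rest) →
      (∀ b ∈ extras, ULLeafLt lt α b) →
      cs.Perm (extras ++ rest) →
      Post lt (Term.app (n, Mark3.plain) cs₀) (Term.app (n, Mark3.ul) cs)
  | inside {n : SBot S} {c c' : Term (HSig S) Empty} {rest cs₀ cs : List (Term (HSig S) Empty)} :
      Post lt c c' → cs₀.Perm (c :: rest) → cs.Perm (c' :: rest) →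
      Post lt (Term.app (n, Mark3.plain) cs₀) (Term.app (n, Mark3.plain) cs)
  | lifted {n : SBot S} {c c' : Term (HSig S) Empty} {rest cs₀ cs : List (Term (HSig S) Empty)} :
      Post lt c c' → (∃ m xs, c' = Term.app (m, Mark3.ul) xs) →
      cs₀.Perm (c :: rest) → cs.Perm (c' :: rest) →
      Post lt (Term.app (n, Mark3.plain) cs₀) (Term.app (n, Mark3.ul) cs)

/-- State after chop and full propagation. -/
inductive PostF (lt : S → S → Prop) : Term (HSig S) Empty → Term (HSig S) Empty → Prop
  | chopped {n α : SBot S} {rest extras cs₀ cs : List (Term (HSig S) Empty)} :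
      cs₀.Perm (Term.app (α, Mark3.plain) [] :: rest) →
      (∀ b ∈ extras, ULLeafLt lt α b) →
      cs.Perm (extras ++ rest) →
      PostF lt (Term.app (n, Mark3.plain) cs₀) (Term.app (n, Mark3.ul) cs)
  | lifted {n : SBot S} {c c' : Term (HSig S) Empty} {rest cs₀ cs : List (Term (HSig S) Empty)} :
      PostF lt c c' → cs₀.Perm (c :: rest) → cs.Perm (c' :: rest) →
      PostF lt (Term.app (n, Mark3.plain) cs₀) (Term.app (n, Mark3.ul) cs)

/-- One hydra step, viewed on plain terms. -/
inductive Mid (lt : S → S → Prop) : Term (HSig S) Empty → Term (HSig S) Empty → Prop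
  | chop {n α : SBot S} {rest extras cs₀ cs : List (Term (HSig S) Empty)} :
      cs₀.Perm (Term.app (α, Mark3.plain) [] :: rest) →
      (∀ w ∈ extras, SmallTree lt α w) →
      cs.Perm (extras ++ rest) →
      Mid lt (Term.app (n, Mark3.plain) cs₀) (Term.app (n, Mark3.plain) cs)
  | spine {n g : SBot S} {ys K rest cs₀ cs : List (Term (HSig S) Empty)} :
      (∀ w ∈ K, Mid lt (Term.app (g, Mark3.plain) ys) w) →
      cs₀.Perm (Term.app (g, Mark3.plain) ys :: rest) →
      cs.Perm (K ++ rest) →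
      Mid lt (Term.app (n, Mark3.plain) cs₀) (Term.app (n, Mark3.plain) cs)
  | up {n m : SBot S} {K cs₀ : List (Term (HSig S) Empty)} : ltBot lt m n →
      (∀ w ∈ K, Mid lt (Term.app (n, Mark3.plain) cs₀) w) →
      Mid lt (Term.app (n, Mark3.plain) cs₀) (Term.app (m, Mark3.plain) K)

end HydraDefs

section Transport

variable {S : Type} {lt : S → S → Prop}

lemma PlainTerm.equiv {t u : Term (HSig S) Empty} (h : PlainTerm t) (he : TermEquiv t u) :
    PlainTerm u := Uses.of_equiv h he

lemma SPlainTerm.equiv {t u : Term (HSig S) Empty} (h : SPlainTerm t) (he : TermEquiv t u) :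
    SPlainTerm u := Uses.of_equiv h he

lemma MGen.equiv {u u' v : Term (HSig S) Empty} (h : MGen lt u v) (he : TermEquiv u u') :
    MGen lt u' v := by
  induction h generalizing u' with
  | refl h1 h2 => exact MGen.refl (he.symm.trans h1) h2
  | nodeNil n =>
      obtain ⟨M, rfl, hLM⟩ := he.app_inv
      rw [leq_nil hLM]
      exact MGen.nodeNil n
  | @nodePlain n cs cs₀ L c c' hperm hpl hce _ ih =>
      obtain ⟨M, rfl, hLM⟩ := he.app_inv
      have h2 : LEq (c :: cs₀) M := LEq.perm_left hperm.symm hLM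
      obtain ⟨zs, F, P⟩ := h2
      cases F with
      | @cons _ c₂ _ zs₀ hc F' =>
          exact MGen.nodePlain P.symm (hpl.equiv hc) (hc.symm.trans hce)
            (ih (TermEquiv.of_LEq _ (LEq.of_forall₂ F')))
  | @nodeUL n m cs cs₀ L K xs hperm hK sub ihK ihsub =>
      obtain ⟨M, rfl, hLM⟩ := he.app_inv
      have h2 : LEq (Term.app (m, Mark3.ul) xs :: cs₀) M := LEq.perm_left hperm.symm hLM
      obtain ⟨zs, F, P⟩ := h2
      cases F with
      | @cons _ e₂ _ zs₀ hc F' =>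
          obtain ⟨xs₂, rfl, _⟩ := hc.app_inv
          exact MGen.nodeUL P.symm (fun w hw => ihK w hw hc)
            (ihsub (TermEquiv.of_LEq _ (LEq.of_forall₂ F')))
  | up hmn hK ih =>
      obtain ⟨M, rfl, _⟩ := he.app_inv
      exact MGen.up hmn (fun w hw => ih w hw he)

lemma MGen.perm {a : HSig S} {cs cs' : List (Term (HSig S) Empty)} {v : Term (HSig S) Empty}
    (h : MGen lt (Term.app a cs) v) (hp : cs.Perm cs') : MGen lt (Term.app a cs') v :=
  h.equiv (TermEquiv.of_perm a hp)

lemma Shape.equiv {u u' : Term (HSig S) Empty} (h : Shape u) (he : TermEquiv u u') :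
    Shape u' := by
  induction h generalizing u' with
  | plainT h => exact Shape.plainT (h.equiv he)
  | ulNode n cs hcs ih =>
      obtain ⟨M, rfl, hLM⟩ := he.app_inv
      refine Shape.ulNode n M ?_
      intro m hm
      obtain ⟨zs, F, P⟩ := hLM
      obtain ⟨a, ha, hae⟩ := forall₂_mem_right F (P.mem_iff.mpr hm)
      exact ih a ha hae

lemma Post.equiv {s u u' : Term (HSig S) Empty} (h : Post lt s u) (he : TermEquiv u u') :
    ∃ s', TermEquiv s s' ∧ Post lt s' u' := by
  induction h generalizing u' with
  | @chopped n α rest extras cs₀ cs hcs₀ hex hcs =>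
      obtain ⟨M, rfl, hLM⟩ := he.app_inv
      have h2 : LEq (extras ++ rest) M := LEq.perm_left hcs.symm hLM
      obtain ⟨zs, F, P⟩ := h2
      obtain ⟨zsE, zsR, rfl, FE, FR⟩ := forall₂_append_inv_left F
      refine ⟨Term.app (n, Mark3.plain) (Term.app (α, Mark3.plain) [] :: zsR), ?_, ?_⟩
      · exact TermEquiv.of_LEq _ ((LEq.of_perm hcs₀).trans
          (LEq.cons (TermEquiv.refl _) (LEq.of_forall₂ FR)))
      · refine Post.chopped (List.Perm.refl _) ?_ P.symm
        intro b hb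
        obtain ⟨a, ha, hae⟩ := forall₂_mem_right FE hb
        obtain ⟨β, hβ, rfl⟩ := hex a ha
        obtain ⟨M₂, rfl, hM₂⟩ := hae.app_inv
        rw [leq_nil hM₂]
        exact ⟨β, hβ, rfl⟩
  | @inside n c c' rest cs₀ cs hsub hcs₀ hcs ih =>
      obtain ⟨M, rfl, hLM⟩ := he.app_inv
      have h2 : LEq (c' :: rest) M := LEq.perm_left hcs.symm hLM
      obtain ⟨zs, F, P⟩ := h2
      cases F with
      | @cons _ c₂' _ zsR hc F' =>
          obtain ⟨c₂, hcc₂, hpost⟩ := ih hc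
          refine ⟨Term.app (n, Mark3.plain) (c₂ :: zsR), ?_, ?_⟩
          · exact TermEquiv.of_LEq _ ((LEq.of_perm hcs₀).trans
              (LEq.cons hcc₂ (LEq.of_forall₂ F')))
          · exact Post.inside hpost (List.Perm.refl _) P.symm
  | @lifted n c c' rest cs₀ cs hsub hul hcs₀ hcs ih =>
      obtain ⟨M, rfl, hLM⟩ := he.app_inv
      have h2 : LEq (c' :: rest) M := LEq.perm_left hcs.symm hLM
      obtain ⟨zs, F, P⟩ := h2
      cases F with
      | @cons _ c₂' _ zsR hc F' =>
          obtain ⟨c₂, hcc₂, hpost⟩ := ih hc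
          obtain ⟨m, xs, rfl⟩ := hul
          obtain ⟨xs₂, rfl, _⟩ := hc.app_inv
          refine ⟨Term.app (n, Mark3.plain) (c₂ :: zsR), ?_, ?_⟩
          · exact TermEquiv.of_LEq _ ((LEq.of_perm hcs₀).trans
              (LEq.cons hcc₂ (LEq.of_forall₂ F')))
          · exact Post.lifted hpost ⟨m, xs₂, rfl⟩ (List.Perm.refl _) P.symm

end Transport

section Preservation

variable {S : Type} {lt : S → S → Prop}

lemma ltBot_irrefl (hirr : Irreflexive lt) : ∀ a : SBot S, ¬ ltBot lt a a := by
  intro a h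
  cases a with
  | none => exact h
  | some a => exact hirr a h

lemma ltBot_trans (htrans : Transitive lt) :
    ∀ {a b c : SBot S}, ltBot lt a b → ltBot lt b c → ltBot lt a c := by
  intro a b c h1 h2
  cases a <;> cases b <;> cases c <;> simp_all [ltBot]
  exact htrans h1 h2

lemma perm_swap_blocks {α : Type*} (A B C : List α) :
    (A ++ (B ++ C)).Perm (B ++ (A ++ C)) := by
  have := (List.perm_append_comm (l₁ := A) (l₂ := B)).append_right C
  simpa [List.append_assoc] using this

lemma list_choice {β : Type*} {Q : β → Prop} {R : β → β → Prop} {K : List β}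
    (h : ∀ w ∈ K, ∃ w', Q w' ∧ R w' w) :
    ∃ K', (∀ w' ∈ K', Q w') ∧ List.Forall₂ R K' K := by
  induction K with
  | nil => exact ⟨[], by simp, List.Forall₂.nil⟩
  | cons a K ih =>
      obtain ⟨a', hQa, hRa⟩ := h a (List.mem_cons_self)
      obtain ⟨K', hQ, hF⟩ := ih (fun w hw => h w (List.mem_cons_of_mem _ hw))
      refine ⟨a' :: K', ?_, List.Forall₂.cons hRa hF⟩
      intro w hw
      rcases List.mem_cons.mp hw with rfl | hw'
      · exact hQa
      · exact hQ w hw'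

lemma TermEquiv.app_inv_rev {v₁ : Term (HSig S) Empty} {f : HSig S}
    {L : List (Term (HSig S) Empty)} (h : TermEquiv v₁ (Term.app f L)) :
    ∃ L₁, v₁ = Term.app f L₁ ∧ LEq L₁ L := by
  obtain ⟨L₁, h1, h2⟩ := h.symm.app_inv
  exact ⟨L₁, h1, h2.symm⟩

lemma mgen_ul_refl_false {n : SBot S} {cs : List (Term (HSig S) Empty)}
    {v : Term (HSig S) Empty} (h1 : TermEquiv (Term.app (n, Mark3.ul) cs) v)
    (h2 : PlainTerm v) : False := by
  obtain ⟨M, rfl, _⟩ := h1.app_inv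
  exact not_plain_ul h2

/-- Inserting extra results generated by an underlined child already present. -/
lemma mgen_insert (hirr : Irreflexive lt) {u v : Term (HSig S) Empty}
    (h : MGen lt u v) :
    ∀ n cs₀ L u₀ ds K, u = Term.app (n, Mark3.ul) cs₀ → v = Term.app (n, Mark3.plain) L →
    cs₀.Perm (u₀ :: ds) → (∀ w ∈ K, MGen lt u₀ w) →
    (∃ m xs, u₀ = Term.app (m, Mark3.ul) xs) →
    ∃ L₂, L₂.Perm (K ++ L) ∧ MGen lt u (Term.app (n, Mark3.plain) L₂) := by
  induction h with
  | refl h1 h2 =>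
      intro n cs₀ L u₀ ds K hu hv hperm hK hul
      subst hu; exact absurd h2 (fun hp => mgen_ul_refl_false h1 hp)
  | nodeNil n' =>
      intro n cs₀ L u₀ ds K hu hv hperm hK hul
      cases hu
      exact absurd hperm.nil_eq (by simp)
  | @nodePlain n' cs cs₂ L₀ c c' hp hpl hce sub ih =>
      intro n cs₀ L u₀ ds K hu hv hperm hK hul
      cases hu; cases hv
      rcases perm_cons_cases hp hperm with ⟨rfl, _⟩ | ⟨r, hr1, hr2⟩
      · obtain ⟨m, xs, rfl⟩ := hul; exact absurd hpl not_plain_ul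
      · obtain ⟨L₂', hL₂', hchain⟩ := ih n' cs₂ L₀ u₀ r K rfl rfl hr1 hK hul
        refine ⟨c' :: L₂', ?_, MGen.nodePlain hp hpl hce hchain⟩
        exact (hL₂'.cons c').trans (List.perm_middle.symm)
  | @nodeUL n' m' cs cs₂ L₀ K' xs' hp hK' sub ihK ih =>
      intro n cs₀ L u₀ ds K hu hv hperm hK hul
      cases hu; cases hv
      by_cases he : Term.app (m', Mark3.ul) xs' = u₀
      · refine ⟨(K ++ K') ++ L₀, ?_, ?_⟩
        · simp [List.append_assoc]
        · have hKK : ∀ w ∈ K ++ K', MGen lt (Term.app (m', Mark3.ul) xs') w := by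
            intro w hw
            rcases List.mem_append.mp hw with hw' | hw'
            · exact he ▸ (hK w hw')
            · exact hK' w hw'
          exact MGen.nodeUL hp hKK sub
      · rcases perm_cons_cases hp hperm with ⟨heq, _⟩ | ⟨r, hr1, hr2⟩
        · exact absurd heq he
        · obtain ⟨L₂', hL₂', hchain⟩ := ih n' cs₂ L₀ u₀ r K rfl rfl hr1 hK hul
          refine ⟨K' ++ L₂', ?_, MGen.nodeUL hp hK' hchain⟩
          exact ((hL₂'.append_left K')).trans (perm_swap_blocks K' K L₀)
  | @up n' m' K' cs' hmn hK' ih =>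
      intro n cs₀ L u₀ ds K hu hv hperm hK hul
      cases hu
      have hmn' : m' = n' := by
        have h5 := congrArg (fun t => match t with | Term.app f _ => f.1 | _ => n') hv
        simpa using h5
      subst hmn'
      exact absurd hmn (ltBot_irrefl hirr m')

/-- Merging two identical underlined children into one. -/
lemma mgen_merge (hirr : Irreflexive lt) {u v : Term (HSig S) Empty} (h : MGen lt u v) :
    ∀ n cs u₀ ds, u = Term.app (n, Mark3.ul) cs → cs.Perm (u₀ :: u₀ :: ds) →
    (∃ m xs, u₀ = Term.app (m, Mark3.ul) xs) →
    ∃ v', MGen lt (Term.app (n, Mark3.ul) (u₀ :: ds)) v' ∧ TermEquiv v' v := by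
  induction h with
  | refl h1 h2 =>
      intro n cs u₀ ds hu hperm hul
      subst hu; exact absurd h2 (fun hp => mgen_ul_refl_false h1 hp)
  | nodeNil n' =>
      intro n cs u₀ ds hu hperm hul
      cases hu
      exact absurd hperm.nil_eq (by simp)
  | @nodePlain n' cs' cs₂ L₀ c c' hp hpl hce sub ih =>
      intro n cs u₀ ds hu hperm hul
      cases hu
      have hcu : c ≠ u₀ := by
        rintro rfl
        obtain ⟨m, xs, rfl⟩ := hul
        exact not_plain_ul hpl
      rcases perm_cons_cases hp hperm with ⟨heq, _⟩ | ⟨r, hr1, hr2⟩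
      · exact absurd heq hcu
      · rcases perm_cons_cases (List.Perm.refl (u₀ :: ds)) hr2 with ⟨heq, _⟩ | ⟨r₂, hq1, hq2⟩
        · exact absurd heq.symm hcu
        · have hcs₂ : cs₂.Perm (u₀ :: u₀ :: r₂) := hr1.trans (hq2.cons u₀)
          obtain ⟨v₁, hchain, hte⟩ := ih n' cs₂ u₀ r₂ rfl hcs₂ hul
          obtain ⟨L₁, rfl, hL₁⟩ := hte.app_inv_rev
          refine ⟨Term.app (n', Mark3.plain) (c' :: L₁), ?_, ?_⟩
          · refine MGen.nodePlain ?_ hpl hce hchain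
            exact (hq1.cons u₀).trans (List.Perm.swap c u₀ r₂)
          · exact TermEquiv.of_LEq _ (LEq.cons (TermEquiv.refl c') hL₁)
  | @nodeUL n' m' cs' cs₂ L₀ K' xs' hp hK' sub ihK ih =>
      intro n cs u₀ ds hu hperm hul
      cases hu
      by_cases he : Term.app (m', Mark3.ul) xs' = u₀
      · have hcs₂ : cs₂.Perm (u₀ :: ds) := by
          rcases perm_cons_cases hp hperm with ⟨heq, hpe⟩ | ⟨r, hr1, hr2⟩
          · exact hpe
          · have hr2' : (u₀ :: ds).Perm (u₀ :: r) := by rw [← he] at hr2 ⊢; exact hr2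
            exact hr1.trans ((hr2'.cons_inv).symm.cons _)
        obtain ⟨L₂, hL₂, hchain⟩ :=
          mgen_insert hirr sub n' cs₂ L₀ u₀ ds K' rfl rfl hcs₂ (fun w hw => he ▸ hK' w hw) hul
        refine ⟨Term.app (n', Mark3.plain) L₂, hchain.perm hcs₂,
          TermEquiv.of_LEq _ (LEq.of_perm hL₂)⟩
      · rcases perm_cons_cases hp hperm with ⟨heq, _⟩ | ⟨r, hr1, hr2⟩
        · exact absurd heq he
        · rcases perm_cons_cases (List.Perm.refl (u₀ :: ds)) hr2
            with ⟨heq, _⟩ | ⟨r₂, hq1, hq2⟩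
          · exact absurd heq.symm he
          · have hcs₂ : cs₂.Perm (u₀ :: u₀ :: r₂) := hr1.trans (hq2.cons u₀)
            obtain ⟨v₁, hchain, hte⟩ := ih n' cs₂ u₀ r₂ rfl hcs₂ hul
            obtain ⟨L₁, rfl, hL₁⟩ := hte.app_inv_rev
            refine ⟨Term.app (n', Mark3.plain) (K' ++ L₁), ?_, ?_⟩
            · refine MGen.nodeUL ?_ hK' hchain
              exact (hq1.cons u₀).trans (List.Perm.swap _ u₀ r₂)
            · exact TermEquiv.of_LEq _ (LEq.append (LEq.refl K') hL₁)
  | @up n' m' K' cs' hmn hK' ih =>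
      intro n cs u₀ ds hu hperm hul
      cases hu
      obtain ⟨K₂, hQ, hF⟩ := list_choice
        (fun w hw => ih w hw n' cs' u₀ ds rfl hperm hul)
      exact ⟨Term.app (m', Mark3.plain) K₂, MGen.up hmn hQ,
        TermEquiv.of_LEq _ (LEq.of_forall₂ hF)⟩

/-- Deleting an underlined child (widen with 0 copies, in reverse). -/
lemma mgen_del {u v : Term (HSig S) Empty} (h : MGen lt u v) :
    ∀ n cs u₀, u = Term.app (n, Mark3.ul) cs →
    (∃ m xs, u₀ = Term.app (m, Mark3.ul) xs) →
    MGen lt (Term.app (n, Mark3.ul) (u₀ :: cs)) v := by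
  induction h with
  | refl h1 h2 =>
      intro n cs u₀ hu hul
      subst hu; exact absurd h2 (fun hp => mgen_ul_refl_false h1 hp)
  | nodeNil n' =>
      intro n cs u₀ hu hul
      cases hu
      obtain ⟨m, xs, rfl⟩ := hul
      exact MGen.nodeUL (List.Perm.refl _) (fun w hw => absurd hw List.not_mem_nil) (MGen.nodeNil n')
  | @nodePlain n' cs' cs₂ L₀ c c' hp hpl hce sub ih =>
      intro n cs u₀ hu hul
      cases hu
      refine MGen.nodePlain ?_ hpl hce (ih n' cs₂ u₀ rfl hul)
      exact ((hp.cons u₀).trans (List.Perm.swap c u₀ cs₂))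
  | @nodeUL n' m' cs' cs₂ L₀ K' xs' hp hK' sub ihK ih =>
      intro n cs u₀ hu hul
      cases hu
      refine MGen.nodeUL ?_ hK' (ih n' cs₂ u₀ rfl hul)
      exact ((hp.cons u₀).trans (List.Perm.swap _ u₀ cs₂))
  | @up n' m' K' cs' hmn hK' ih =>
      intro n cs u₀ hu hul
      cases hu
      exact MGen.up hmn (fun w hw => ih w hw n' cs' u₀ rfl hul)

end Preservation

section Preservation2

variable {S : Type} {lt : S → S → Prop}

lemma mgen_nil_inv (hirr : Irreflexive lt) {u v : Term (HSig S) Empty} (h : MGen lt u v) :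
    ∀ f L, u = Term.app (f, Mark3.ul) [] → v = Term.app (f, Mark3.plain) L → L = [] := by
  induction h with
  | refl h1 h2 =>
      intro f L hu hv
      subst hu; exact absurd h2 (fun hp => mgen_ul_refl_false h1 hp)
  | nodeNil n' => intro f L hu hv; cases hu; cases hv; rfl
  | @nodePlain n' cs cs₂ L₀ c c' hp hpl hce sub ih =>
      intro f L hu hv; cases hu
      exact absurd hp.nil_eq (by simp)
  | @nodeUL n' m' cs cs₂ L₀ K' xs' hp hK' sub ihK ih =>
      intro f L hu hv; cases hu
      exact absurd hp.nil_eq (by simp)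
  | @up n' m' K' cs' hmn hK' ih =>
      intro f L hu hv; cases hu
      have hmn' : m' = n' := by
        have h5 := congrArg (fun t => match t with | Term.app f _ => f.1 | _ => n') hv
        simpa using h5
      subst hmn'
      exact absurd hmn (ltBot_irrefl hirr m')

lemma mgen_widen_root (hirr : Irreflexive lt) {n m : SBot S}
    {xs ys : List (Term (HSig S) Empty)} (k : ℕ) {v : Term (HSig S) Empty}
    (h : MGen lt (Term.app (n, Mark3.ul)
        (List.replicate k (Term.app (m, Mark3.ul) xs) ++ ys)) v) :
    ∃ v', MGen lt (Term.app (n, Mark3.ul) (Term.app (m, Mark3.ul) xs :: ys)) v' ∧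
      TermEquiv v' v := by
  induction k generalizing v with
  | zero =>
      simp only [List.replicate, List.nil_append] at h
      exact ⟨v, mgen_del h n ys _ rfl ⟨m, xs, rfl⟩, TermEquiv.refl v⟩
  | succ j ih =>
      cases j with
      | zero =>
          refine ⟨v, ?_, TermEquiv.refl v⟩
          simpa [List.replicate] using h
      | succ i =>
          have h' : MGen lt (Term.app (n, Mark3.ul)
              (Term.app (m, Mark3.ul) xs :: Term.app (m, Mark3.ul) xs ::
                (List.replicate i (Term.app (m, Mark3.ul) xs) ++ ys))) v := by
            simpa [List.replicate_succ] using h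
          obtain ⟨v₁, h₁, e₁⟩ := mgen_merge hirr h' n _ _ _ rfl (List.Perm.refl _) ⟨m, xs, rfl⟩
          have h₁' : MGen lt (Term.app (n, Mark3.ul)
              (List.replicate (i + 1) (Term.app (m, Mark3.ul) xs) ++ ys)) v₁ := by
            simpa [List.replicate_succ] using h₁
          obtain ⟨v₂, h₂, e₂⟩ := ih h₁'
          exact ⟨v₂, h₂, e₂.trans e₁⟩

lemma mgen_lengthen_root (hirr : Irreflexive lt) (htrans : Transitive lt)
    {u v : Term (HSig S) Empty} (h : MGen lt u v) :
    ∀ m n cs, u = Term.app (m, Mark3.ul) [Term.app (n, Mark3.ul) cs] → ltBot lt m n →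
    ∃ v', MGen lt (Term.app (n, Mark3.ul) cs) v' ∧ TermEquiv v' v := by
  induction h with
  | refl h1 h2 =>
      intro m n cs hu hmn
      subst hu; exact absurd h2 (fun hp => mgen_ul_refl_false h1 hp)
  | nodeNil n' => intro m n cs hu hmn; cases hu
  | @nodePlain n' cs' cs₂ L₀ c c' hp hpl hce sub ih =>
      intro m n cs hu hmn; cases hu
      have h9 := List.singleton_perm.mp hp
      simp only [List.cons.injEq] at h9
      rw [← h9.1] at hpl
      exact absurd hpl not_plain_ul
  | @nodeUL n' m' cs' cs₂ L₀ K' xs' hp hK' sub ihK ih =>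
      intro m n cs hu hmn; cases hu
      have h9 := List.singleton_perm.mp hp
      simp only [List.cons.injEq] at h9
      obtain ⟨hc1, hc2⟩ := h9
      subst hc2
      have hL₀ : L₀ = [] := mgen_nil_inv hirr sub n' L₀ rfl rfl
      subst hL₀
      refine ⟨Term.app (n', Mark3.plain) K', ?_, ?_⟩
      · exact MGen.up hmn (fun w hw => by rw [hc1]; exact hK' w hw)
      · exact TermEquiv.of_perm _ (by simp)
  | @up n' m₂ K' cs' hmn₂ hK' ih =>
      intro m n cs hu hmn; cases hu
      obtain ⟨K₂, hQ, hF⟩ := list_choice (fun w hw => ih w hw n' n cs rfl hmn)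
      exact ⟨Term.app (m₂, Mark3.plain) K₂, MGen.up (ltBot_trans htrans hmn₂ hmn) hQ,
        TermEquiv.of_LEq _ (LEq.of_forall₂ hF)⟩

/-- Context lemma: replacing one (non-plain) argument by a simulating one. -/
lemma mgen_ctx {a b : Term (HSig S) Empty}
    (hTa : ¬ PlainTerm a)
    (hmark : ∀ m xs, a = Term.app (m, Mark3.ul) xs →
      ∃ m' xs', b = Term.app (m', Mark3.ul) xs')
    (hT : ∀ w, MGen lt a w → ∃ w', MGen lt b w' ∧ TermEquiv w' w)
    {u v : Term (HSig S) Empty} (h : MGen lt u v) :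
    ∀ n cs rest, u = Term.app (n, Mark3.ul) cs → cs.Perm (a :: rest) →
    ∃ v', MGen lt (Term.app (n, Mark3.ul) (b :: rest)) v' ∧ TermEquiv v' v := by
  induction h with
  | refl h1 h2 =>
      intro n cs rest hu hperm
      subst hu; exact absurd h2 (fun hp => mgen_ul_refl_false h1 hp)
  | nodeNil n' =>
      intro n cs rest hu hperm; cases hu
      exact absurd hperm.nil_eq (by simp)
  | @nodePlain n' cs' cs₂ L₀ c c' hp hpl hce sub ih =>
      intro n cs rest hu hperm; cases hu
      rcases perm_cons_cases hp hperm with ⟨rfl, _⟩ | ⟨r, hr1, hr2⟩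
      · exact absurd hpl hTa
      · obtain ⟨v₁, hchain, hte⟩ := ih n' cs₂ r rfl hr1
        obtain ⟨L₁, rfl, hL₁⟩ := hte.app_inv_rev
        refine ⟨Term.app (n', Mark3.plain) (c' :: L₁),
          MGen.nodePlain ?_ hpl hce hchain,
          TermEquiv.of_LEq _ (LEq.cons (TermEquiv.refl c') hL₁)⟩
        exact (hr2.cons b).trans (List.Perm.swap c b r)
  | @nodeUL n' m' cs' cs₂ L₀ K' xs' hp hK' sub ihK ih =>
      intro n cs rest hu hperm; cases hu
      by_cases he : Term.app (m', Mark3.ul) xs' = a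
      · obtain ⟨mb, xsb, hb⟩ := hmark m' xs' he.symm
        rcases perm_cons_cases hp hperm with ⟨_, hpe⟩ | ⟨r, hr1, hr2⟩
        · obtain ⟨K₂, hQ, hF⟩ := list_choice (fun w hw => hT w (he ▸ hK' w hw))
          refine ⟨Term.app (n', Mark3.plain) (K₂ ++ L₀), ?_, ?_⟩
          · subst hb
            exact MGen.nodeUL (List.Perm.refl _) hQ (sub.perm hpe)
          · exact TermEquiv.of_LEq _ (LEq.append (LEq.of_forall₂ hF) (LEq.refl L₀))
        · obtain ⟨v₁, hchain, hte⟩ := ih n' cs₂ r rfl hr1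
          obtain ⟨L₁, rfl, hL₁⟩ := hte.app_inv_rev
          refine ⟨Term.app (n', Mark3.plain) (K' ++ L₁), ?_, ?_⟩
          · refine MGen.nodeUL (cs₀ := b :: r) ?_ hK' hchain
            exact (hr2.cons b).trans (List.Perm.swap _ b r)
          · exact TermEquiv.of_LEq _ (LEq.append (LEq.refl K') hL₁)
      · rcases perm_cons_cases hp hperm with ⟨heq, _⟩ | ⟨r, hr1, hr2⟩
        · exact absurd heq he
        · obtain ⟨v₁, hchain, hte⟩ := ih n' cs₂ r rfl hr1
          obtain ⟨L₁, rfl, hL₁⟩ := hte.app_inv_rev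
          refine ⟨Term.app (n', Mark3.plain) (K' ++ L₁), ?_, ?_⟩
          · refine MGen.nodeUL (cs₀ := b :: r) ?_ hK' hchain
            exact (hr2.cons b).trans (List.Perm.swap _ b r)
          · exact TermEquiv.of_LEq _ (LEq.append (LEq.refl K') hL₁)
  | @up n' m' K' cs' hmn hK' ih =>
      intro n cs rest hu hperm; cases hu
      obtain ⟨K₂, hQ, hF⟩ := list_choice (fun w hw => ih w hw n' cs' rest rfl hperm)
      exact ⟨Term.app (m', Mark3.plain) K₂, MGen.up hmn hQ,
        TermEquiv.of_LEq _ (LEq.of_forall₂ hF)⟩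

lemma rw_not_plain_right {R : Term (HSig S) Empty → Term (HSig S) Empty → Prop}
    (hR : ∀ p q, R p q → ¬ PlainTerm q) {p q : Term (HSig S) Empty}
    (h : Rewrite R p q) : ¬ PlainTerm q := by
  induction h with
  | root h => exact hR _ _ h
  | @congr s t f pre post h' ih =>
      intro hpl
      exact ih ((plain_app_inv hpl).2 t (by simp))

lemma rw_not_plain_left {R : Term (HSig S) Empty → Term (HSig S) Empty → Prop}
    (hR : ∀ p q, R p q → ¬ PlainTerm p) {p q : Term (HSig S) Empty}
    (h : Rewrite R p q) : ¬ PlainTerm p := by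
  induction h with
  | root h => exact hR _ _ h
  | @congr s t f pre post h' ih =>
      intro hpl
      exact ih ((plain_app_inv hpl).2 s (by simp))

lemma rw_ul_root {R : Term (HSig S) Empty → Term (HSig S) Empty → Prop}
    (hR : ∀ p q m xs, R p q → q = Term.app (m, Mark3.ul) xs →
      ∃ m' xs', p = Term.app (m', Mark3.ul) xs')
    {p q : Term (HSig S) Empty} (h : Rewrite R p q) :
    ∀ m xs, q = Term.app (m, Mark3.ul) xs → ∃ m' xs', p = Term.app (m', Mark3.ul) xs' := by
  induction h with
  | root h => exact fun m xs hq => hR _ _ m xs h hq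
  | @congr s t f pre post h' ih =>
      intro m xs hq
      injection hq with h1 h2
      exact ⟨m, pre ++ s :: post, by rw [← h1]⟩

theorem mgen_preserve {R : Term (HSig S) Empty → Term (HSig S) Empty → Prop}
    (hroot : ∀ p q v, R p q → MGen lt q v → ∃ v', MGen lt p v' ∧ TermEquiv v' v)
    (hnpq : ∀ p q, R p q → ¬ PlainTerm q)
    (hmk : ∀ p q m xs, R p q → q = Term.app (m, Mark3.ul) xs →
      ∃ m' xs', p = Term.app (m', Mark3.ul) xs')
    {p q : Term (HSig S) Empty} (hr : Rewrite R p q) :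
    ∀ v, MGen lt q v → ∃ v', MGen lt p v' ∧ TermEquiv v' v := by
  induction hr with
  | root h => exact fun v hv => hroot _ _ v h hv
  | @congr s t f pre post h' ih =>
      intro v hv
      obtain ⟨nf, mk⟩ := f
      have hnt : ¬ PlainTerm t := rw_not_plain_right hnpq h'
      cases mk with
      | ul =>
          obtain ⟨v', hchain, hte⟩ := mgen_ctx hnt (rw_ul_root hmk h') ih hv nf _ _ rfl
            List.perm_middle
          exact ⟨v', hchain.perm (List.perm_middle (a := s)).symm, hte⟩
      | plain =>
          exfalso
          cases hv with
          | refl h1 h2 =>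
              have hq : PlainTerm (Term.app (nf, Mark3.plain) (pre ++ t :: post)) :=
                h2.equiv h1.symm
              exact hnt ((plain_app_inv hq).2 t (by simp))
      | star =>
          exfalso
          cases hv with
          | refl h1 h2 =>
              have hq : PlainTerm (Term.app (nf, Mark3.star) (pre ++ t :: post)) :=
                h2.equiv h1.symm
              exact absurd (plain_app_inv hq).1 (by simp)

lemma mgen_preserve_widen (hirr : Irreflexive lt) {p q : Term (HSig S) Empty}
    (hr : Rewrite WidenRoot p q) :
    ∀ v, MGen lt q v → ∃ v', MGen lt p v' ∧ TermEquiv v' v := by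
  refine mgen_preserve ?_ ?_ ?_ hr
  · intro p q v h hv
    cases h with
    | widen n m k xs ys => exact mgen_widen_root hirr k hv
  · intro p q h
    cases h with
    | widen n m k xs ys => exact not_plain_ul
  · intro p q m xs h hq
    cases h with
    | widen n m' k xs' ys => exact ⟨n, _, rfl⟩

lemma mgen_preserve_lengthen (hirr : Irreflexive lt) (htrans : Transitive lt)
    {p q : Term (HSig S) Empty} (hr : Rewrite (LengthenRoot lt) p q) :
    ∀ v, MGen lt q v → ∃ v', MGen lt p v' ∧ TermEquiv v' v := by
  refine mgen_preserve ?_ ?_ ?_ hr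
  · intro p q v h hv
    cases h with
    | lengthen n m xs hmn => exact mgen_lengthen_root hirr htrans hv m n xs rfl hmn
  · intro p q h
    cases h with
    | lengthen n m xs hmn => exact not_plain_ul
  · intro p q m' xs' h hq
    cases h with
    | lengthen n m xs hmn => exact ⟨n, _, rfl⟩

lemma shape_ul_inv {n : SBot S} {cs : List (Term (HSig S) Empty)}
    (h : Shape (Term.app (n, Mark3.ul) cs)) : ∀ c ∈ cs, Shape c := by
  cases h with
  | plainT hp => exact absurd hp not_plain_ul
  | ulNode _ _ hcs => exact hcs

lemma rw_shape {R : Term (HSig S) Empty → Term (HSig S) Empty → Prop}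
    (hroot : ∀ p q, R p q → Shape p → Shape q)
    (hnp : ∀ p q, R p q → ¬ PlainTerm p)
    {p q : Term (HSig S) Empty} (h : Rewrite R p q) (hs : Shape p) : Shape q := by
  induction h with
  | root h => exact hroot _ _ h hs
  | @congr s t f pre post h' ih =>
      cases hs with
      | plainT hp =>
          exact absurd ((plain_app_inv hp).2 s (by simp)) (rw_not_plain_left hnp h')
      | ulNode n cs hcs =>
          refine Shape.ulNode n _ ?_
          intro c hc
          rcases List.mem_append.mp hc with hc' | hc'
          · exact hcs c (List.mem_append.mpr (Or.inl hc'))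
          · rcases List.mem_cons.mp hc' with rfl | hc''
            · exact ih (hcs s (by simp))
            · exact hcs c (by simp [hc''])

lemma shape_widen {p q : Term (HSig S) Empty} (h : Rewrite WidenRoot p q) (hs : Shape p) :
    Shape q := by
  refine rw_shape ?_ ?_ h hs
  · intro p q h hs
    cases h with
    | widen n m k xs ys =>
        have hch := shape_ul_inv hs
        refine Shape.ulNode n _ ?_
        intro c hc
        rcases List.mem_append.mp hc with hc' | hc'
        · rw [List.eq_of_mem_replicate hc']
          exact hch _ (by simp)
        · exact hch c (by simp [hc'])
  · intro p q h
    cases h with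
    | widen n m k xs ys => exact not_plain_ul

lemma shape_lengthen {p q : Term (HSig S) Empty} (h : Rewrite (LengthenRoot lt) p q)
    (hs : Shape p) : Shape q := by
  refine rw_shape ?_ ?_ h hs
  · intro p q h hs
    cases h with
    | lengthen n m xs hmn =>
        refine Shape.ulNode m _ ?_
        intro c hc
        rcases List.mem_cons.mp hc with rfl | hc'
        · exact hs
        · cases hc'
  · intro p q h
    cases h with
    | lengthen n m xs hmn => exact not_plain_ul

end Preservation2

section DropUL

variable {σ σ' X : Type} {S : Type} {lt : S → S → Prop}

lemma relabel_app (h : σ → σ') (f : σ) (ts : List (Term σ X)) :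
    Term.relabel h (Term.app f ts) = Term.app (h f) (ts.map (Term.relabel h)) := by
  rw [Term.relabel]
  congr 1
  simpa using List.attach_map_coe ts (Term.relabel h)

lemma dropUL_app (f : HSig S) (ts : List (Term (HSig S) Empty)) :
    dropUnderline (Term.app f ts) =
      Term.app (f.1, f.2.dropUL) (ts.map dropUnderline) := by
  unfold dropUnderline
  exact relabel_app _ f ts

lemma map_id_of_mem {α : Type*} {f : α → α} {l : List α} (h : ∀ a ∈ l, f a = a) :
    l.map f = l := by
  induction l with
  | nil => rfl
  | cons a l ih =>
      simp only [List.map_cons]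
      rw [h a (List.mem_cons_self), ih (fun b hb => h b (List.mem_cons_of_mem _ hb))]

lemma dropUL_plain {t : Term (HSig S) Empty} (h : PlainTerm t) : dropUnderline t = t := by
  induction h with
  | var x => exact x.elim
  | app f ts hf hts ih =>
      rw [dropUL_app]
      congr 1
      · rw [hf]
        show (f.1, Mark3.plain) = f
        rw [← hf]
      · exact map_id_of_mem ih

lemma waive_dropUL {p q : Term (HSig S) Empty} (h : Rewrite WaiveRoot p q) :
    dropUnderline p = dropUnderline q := by
  induction h with
  | root h =>
      cases h with
      | waive m xs => simp [dropUL_app, Mark3.dropUL]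
  | @congr s t f pre post h' ih =>
      simp only [dropUL_app, List.map_append, List.map_cons]
      rw [ih]

lemma swapstep_dropUL {p q : Term (HSig S) Empty} (h : SwapStep p q) :
    SwapStep (dropUnderline p) (dropUnderline q) := by
  induction h with
  | root h =>
      cases h with
      | swap f us x y ws =>
          simp only [dropUL_app, List.map_append, List.map_cons]
          exact Rewrite.root (SwapRoot.swap _ _ _ _ _)
  | @congr s t f pre post h' ih =>
      simp only [dropUL_app, List.map_append, List.map_cons]
      exact Rewrite.congr _ _ _ ih

lemma te_dropUL {p q : Term (HSig S) Empty} (h : TermEquiv p q) :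
    TermEquiv (dropUnderline p) (dropUnderline q) := by
  induction h with
  | rel a b hab => exact TermEquiv.of_step (swapstep_dropUL hab)
  | refl a => exact TermEquiv.refl _
  | symm a b _ ih => exact ih.symm
  | trans a b c _ _ ih1 ih2 => exact ih1.trans ih2

lemma mgen_dropUL_list (n : SBot S) (cs : List (Term (HSig S) Empty))
    (hsh : ∀ c ∈ cs, Shape c) (hgen : ∀ c ∈ cs, MGen lt c (dropUnderline c)) :
    MGen lt (Term.app (n, Mark3.ul) cs)
      (Term.app (n, Mark3.plain) (cs.map dropUnderline)) := by
  induction cs with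
  | nil => exact MGen.nodeNil n
  | cons c cs' ih =>
      have hrest := ih (fun x hx => hsh x (List.mem_cons_of_mem _ hx))
        (fun x hx => hgen x (List.mem_cons_of_mem _ hx))
      have hcsh := hsh c (List.mem_cons_self)
      cases hcsh with
      | plainT hp =>
          refine MGen.nodePlain (List.Perm.refl _) hp ?_ hrest
          rw [dropUL_plain hp]
          exact TermEquiv.refl c
      | ulNode m xs hxs =>
          have : ([dropUnderline (Term.app (m, Mark3.ul) xs)] ++ cs'.map dropUnderline)
              = (Term.app (m, Mark3.ul) xs :: cs').map dropUnderline := by simp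
          rw [← this]
          refine MGen.nodeUL (List.Perm.refl _) ?_ hrest
          intro w hw
          rcases List.mem_singleton.mp hw with rfl
          exact hgen _ (List.mem_cons_self)

/-- Every shaped term generates its own underline-erasure. -/
lemma mgen_dropUL {u : Term (HSig S) Empty} (h : Shape u) : MGen lt u (dropUnderline u) := by
  induction h with
  | plainT hp => rw [dropUL_plain hp]; exact MGen.refl (TermEquiv.refl _) hp
  | ulNode n cs hcs ih =>
      rw [dropUL_app]
      exact mgen_dropUL_list n cs hcs ih

end DropUL

section PostLemmas

variable {S : Type} {lt : S → S → Prop}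

lemma splain_app_inv {f : HSig S} {ts : List (Term (HSig S) Empty)}
    (h : SPlainTerm (Term.app f ts)) :
    (f.2 = Mark3.plain ∧ f.1 ≠ none) ∧ ∀ t ∈ ts, SPlainTerm t := by
  cases h with
  | app f ts hf hts => exact ⟨hf, hts⟩

lemma mem_of_perm_right {α : Type*} {l l' : List α} {a : α} (h : l.Perm l') (ha : a ∈ l') :
    a ∈ l := h.mem_iff.mpr ha

lemma chop_post {p q : Term (HSig S) Empty} (hr : Rewrite (ChopRoot lt) p q) :
    SPlainTerm p → Post lt p q := by
  induction hr with
  | root h =>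
      intro hp
      cases h with
      | chop n α βs xs hβ =>
          refine Post.chopped (List.Perm.refl _) ?_ (List.Perm.refl _)
          intro b hb
          obtain ⟨β, hβ', rfl⟩ := List.mem_map.mp hb
          exact ⟨β, hβ β hβ', rfl⟩
  | @congr s t f pre post h' ih =>
      intro hp
      obtain ⟨f1, f2⟩ := f
      have hf2 : f2 = Mark3.plain := (splain_app_inv hp).1.1
      subst hf2
      have hs : SPlainTerm s := (splain_app_inv hp).2 s (by simp)
      exact Post.inside (ih hs) List.perm_middle List.perm_middle

lemma prop_not_plain_left {p q : Term (HSig S) Empty} (h : Rewrite PropagateRoot p q) :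
    ¬ PlainTerm p := by
  refine rw_not_plain_left ?_ h
  intro p q h
  cases h with
  | propagate n m xs ys =>
      intro hpl
      exact not_plain_ul ((plain_app_inv hpl).2 (Term.app (m, Mark3.ul) xs) (by simp))

lemma rewrite_leaf_inv {R : Term (HSig S) Empty → Term (HSig S) Empty → Prop} {g : HSig S}
    {w : Term (HSig S) Empty} (h : Rewrite R (Term.app g []) w) : R (Term.app g []) w := by
  generalize hp : Term.app g [] = p0 at h
  induction h with
  | root h => exact hp ▸ h
  | congr f pre post h' _ =>
      exfalso
      injection hp with h1 h2
      exact absurd h2.symm (by simp)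

lemma no_prop_from_ulleaf {β : SBot S} {w : Term (HSig S) Empty}
    (h : Rewrite PropagateRoot (Term.app (β, Mark3.ul) []) w) : False := by
  cases rewrite_leaf_inv h

lemma prop_rw_ul_left {m : SBot S} {xs : List (Term (HSig S) Empty)}
    {a' : Term (HSig S) Empty}
    (h : Rewrite PropagateRoot (Term.app (m, Mark3.ul) xs) a') :
    ∃ xs', a' = Term.app (m, Mark3.ul) xs' := by
  cases h with
  | root h => cases h
  | congr f pre post h' => exact ⟨_, rfl⟩

lemma post_step {p q : Term (HSig S) Empty} (hr : Rewrite PropagateRoot p q) :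
    ∀ s, SPlainTerm s → Post lt s p → Post lt s q := by
  induction hr with
  | root h =>
      cases h with
      | propagate n m xs ys =>
          intro s hsp hpost
          cases hpost with
          | @inside _ c c' rest cs₀ _ hsub hp1 hp2 =>
              have hrestpl : ∀ b ∈ rest, PlainTerm b := by
                intro b hb
                have : b ∈ cs₀ := mem_of_perm_right hp1 (List.mem_cons_of_mem _ hb)
                exact splain_plain ((splain_app_inv hsp).2 b this)
              rcases perm_cons_cases (List.Perm.refl
                  (Term.app (m, Mark3.ul) xs :: ys)) hp2 with ⟨heq, hpe⟩ | ⟨r, hr1, hr2⟩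
              · subst heq
                exact Post.lifted hsub ⟨m, xs, rfl⟩ hp1 hp2
              · exfalso
                have : Term.app (m, Mark3.ul) xs ∈ rest :=
                  mem_of_perm_right hr2 (List.mem_cons_self)
                exact not_plain_ul (hrestpl _ this)
  | @congr a a' f pre post₂ h' ih =>
      intro s hsp hpost
      have hna : ¬ PlainTerm a := prop_not_plain_left h'
      cases hpost with
      | @chopped _ α rest extras cs₀ _ hp1 hex hp2 =>
          exfalso
          have ham : a ∈ extras ++ rest :=
            mem_of_perm_right hp2.symm (by simp)
          rcases List.mem_append.mp ham with ha | ha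
          · obtain ⟨β, _, rfl⟩ := hex a ha
            exact no_prop_from_ulleaf h'
          · have : a ∈ cs₀ := mem_of_perm_right hp1 (List.mem_cons_of_mem _ ha)
            exact hna (splain_plain ((splain_app_inv hsp).2 a this))
      | @inside _ c c' rest cs₀ _ hsub hp1 hp2 =>
          rcases perm_cons_cases (List.perm_middle (a := a) (l₁ := pre) (l₂ := post₂)) hp2
            with ⟨heq, hpe⟩ | ⟨r, hr1, hr2⟩
          · subst heq
            have hcs : SPlainTerm c :=
              (splain_app_inv hsp).2 c (mem_of_perm_right hp1 (by simp))
            refine Post.inside (ih c hcs hsub) hp1 ?_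
            exact (List.perm_middle).trans (hpe.cons a')
          · exfalso
            have : a ∈ cs₀ := mem_of_perm_right hp1
              (List.mem_cons_of_mem _ (mem_of_perm_right hr2 (by simp)))
            exact hna (splain_plain ((splain_app_inv hsp).2 a this))
      | @lifted _ c c' rest cs₀ _ hsub hul hp1 hp2 =>
          rcases perm_cons_cases (List.perm_middle (a := a) (l₁ := pre) (l₂ := post₂)) hp2
            with ⟨heq, hpe⟩ | ⟨r, hr1, hr2⟩
          · subst heq
            have hcs : SPlainTerm c :=
              (splain_app_inv hsp).2 c (mem_of_perm_right hp1 (by simp))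
            obtain ⟨mm, xsm, rfl⟩ := hul
            obtain ⟨xs', rfl⟩ := prop_rw_ul_left h'
            refine Post.lifted (ih c hcs hsub) ⟨mm, xs', rfl⟩ hp1 ?_
            exact (List.perm_middle).trans (hpe.cons _)
          · exfalso
            have : a ∈ cs₀ := mem_of_perm_right hp1
              (List.mem_cons_of_mem _ (mem_of_perm_right hr2 (by simp)))
            exact hna (splain_plain ((splain_app_inv hsp).2 a this))

lemma postf_rhs_ul {s u : Term (HSig S) Empty} (h : PostF lt s u) :
    ∃ m xs, u = Term.app (m, Mark3.ul) xs := by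
  cases h with
  | chopped _ _ _ => exact ⟨_, _, rfl⟩
  | lifted _ _ _ => exact ⟨_, _, rfl⟩

lemma post_nf {s u : Term (HSig S) Empty} (hpost : Post lt s u) :
    SPlainTerm s → (∀ w, ¬ TreeRel PropagateRoot (Tree.mk u) w) → PostF lt s u := by
  induction hpost with
  | chopped hp1 hex hp2 => intro _ _; exact PostF.chopped hp1 hex hp2
  | @lifted n c c' rest cs₀ cs hsub hul hp1 hp2 ih =>
      intro hsp hnf
      have hcs : SPlainTerm c :=
        (splain_app_inv hsp).2 c (mem_of_perm_right hp1 (by simp))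
      have hnf' : ∀ w, ¬ TreeRel PropagateRoot (Tree.mk c') w := by
        intro w hw
        obtain ⟨p₁, q₁, hmk1, hmk2, hrw⟩ := hw
        have he : TermEquiv c' p₁ := Quotient.exact hmk1
        refine hnf (Tree.mk (Term.app (n, Mark3.ul) (q₁ :: rest))) ?_
        refine ⟨Term.app (n, Mark3.ul) (p₁ :: rest), _, ?_, rfl,
          Rewrite.congr _ [] rest hrw⟩
        exact Quotient.sound ((TermEquiv.of_perm _ hp2).trans (TermEquiv.ctx _ [] rest he))
      exact PostF.lifted (ih hcs hnf') hp1 hp2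
  | @inside n c c' rest cs₀ cs hsub hp1 hp2 ih =>
      intro hsp hnf
      exfalso
      classical
      have hcs : SPlainTerm c :=
        (splain_app_inv hsp).2 c (mem_of_perm_right hp1 (by simp))
      by_cases hstep : ∃ w, TreeRel PropagateRoot (Tree.mk c') w
      · obtain ⟨w, p₁, q₁, hmk1, hmk2, hrw⟩ := hstep
        have he : TermEquiv c' p₁ := Quotient.exact hmk1
        refine hnf (Tree.mk (Term.app (n, Mark3.plain) (q₁ :: rest))) ?_
        refine ⟨Term.app (n, Mark3.plain) (p₁ :: rest), _, ?_, rfl,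
          Rewrite.congr _ [] rest hrw⟩
        exact Quotient.sound ((TermEquiv.of_perm _ hp2).trans (TermEquiv.ctx _ [] rest he))
      · have hpf : PostF lt c c' := ih hcs (fun w hw => hstep ⟨w, hw⟩)
        obtain ⟨m, xs, rfl⟩ := postf_rhs_ul hpf
        refine hnf (Tree.mk (Term.app (n, Mark3.ul) (Term.app (m, Mark3.ul) xs :: rest))) ?_
        exact ⟨Term.app (n, Mark3.plain) (Term.app (m, Mark3.ul) xs :: rest), _,
          Quotient.sound (TermEquiv.of_perm _ hp2), rfl,
          Rewrite.root (PropagateRoot.propagate n m xs rest)⟩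

lemma postf_shape {s u : Term (HSig S) Empty} (h : PostF lt s u) :
    SPlainTerm s → Shape u := by
  induction h with
  | @chopped n α rest extras cs₀ cs hp1 hex hp2 =>
      intro hsp
      refine Shape.ulNode n cs ?_
      intro c hc
      rcases List.mem_append.mp (mem_of_perm_right hp2.symm hc) with hc' | hc'
      · obtain ⟨β, _, rfl⟩ := hex c hc'
        exact Shape.ulNode β [] (fun x hx => absurd hx List.not_mem_nil)
      · exact Shape.plainT (splain_plain ((splain_app_inv hsp).2 c
          (mem_of_perm_right hp1 (List.mem_cons_of_mem _ hc'))))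
  | @lifted n c c' rest cs₀ cs hsub hp1 hp2 ih =>
      intro hsp
      refine Shape.ulNode n cs ?_
      intro x hx
      rcases List.mem_cons.mp (mem_of_perm_right hp2.symm hx) with rfl | hx'
      · exact ih ((splain_app_inv hsp).2 c (mem_of_perm_right hp1 (by simp)))
      · exact Shape.plainT (splain_plain ((splain_app_inv hsp).2 x
          (mem_of_perm_right hp1 (List.mem_cons_of_mem _ hx'))))

end PostLemmas

section Key1

variable {S : Type} {lt : S → S → Prop}

lemma mgen_ulleaf_small (htrans : Transitive lt) {u w : Term (HSig S) Empty}
    (h : MGen lt u w) :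
    ∀ β α, u = Term.app (β, Mark3.ul) [] → ltBot lt β α → SmallTree lt α w := by
  induction h with
  | refl h1 h2 =>
      intro β α hu hβ
      subst hu; exact absurd h2 (fun hp => mgen_ul_refl_false h1 hp)
  | nodeNil n' =>
      intro β α hu hβ
      cases hu
      exact SmallTree.mk n' [] hβ (fun t ht => absurd ht List.not_mem_nil)
  | @nodePlain n' cs cs₂ L₀ c c' hp hpl hce sub ih =>
      intro β α hu hβ; cases hu
      exact absurd hp.nil_eq (by simp)
  | @nodeUL n' m' cs cs₂ L₀ K' xs' hp hK' sub ihK ih =>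
      intro β α hu hβ; cases hu
      exact absurd hp.nil_eq (by simp)
  | @up n' m' K cs hmn hK ih =>
      intro β α hu hβ; cases hu
      exact SmallTree.mk m' K (ltBot_trans htrans hmn hβ) (fun w hw => ih w hw n' α rfl hβ)

lemma mgen_root_eq_of_v (hirr : Irreflexive lt) {n' m' : SBot S} {K L : List (Term (HSig S) Empty)}
    (hv : Term.app (m', Mark3.plain) K = Term.app (n', Mark3.plain) L)
    (hmn : ltBot lt m' n') : False := by
  have hmn' : m' = n' := by
    have h5 := congrArg (fun t => match t with | Term.app f _ => f.1 | _ => n') hv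
    simpa using h5
  subst hmn'
  exact absurd hmn (ltBot_irrefl hirr m')

/-- Chains over all-plain children. -/
lemma mgen_plain_chain (hirr : Irreflexive lt) {u v : Term (HSig S) Empty}
    (h : MGen lt u v) :
    ∀ n cs L, u = Term.app (n, Mark3.ul) cs → v = Term.app (n, Mark3.plain) L →
    (∀ x ∈ cs, PlainTerm x) → LEq L cs := by
  induction h with
  | refl h1 h2 =>
      intro n cs L hu hv hpl
      subst hu; exact absurd h2 (fun hp => mgen_ul_refl_false h1 hp)
  | nodeNil n' =>
      intro n cs L hu hv hpl
      cases hu; cases hv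
      exact LEq.refl []
  | @nodePlain n' cs' cs₂ L₀ c c' hp hpl hce sub ih =>
      intro n cs L hu hv hplain
      cases hu; cases hv
      have hcs₂pl : ∀ x ∈ cs₂, PlainTerm x := fun x hx =>
        hplain x (mem_of_perm_right hp (List.mem_cons_of_mem _ hx))
      have := ih n' cs₂ L₀ rfl rfl hcs₂pl
      exact (LEq.cons hce.symm this).perm_right hp.symm
  | @nodeUL n' m' cs' cs₂ L₀ K' xs' hp hK' sub ihK ih =>
      intro n cs L hu hv hplain
      cases hu
      exact absurd (hplain (Term.app (m', Mark3.ul) xs') (mem_of_perm_right hp (List.mem_cons_self))) not_plain_ul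
  | @up n' m' K cs' hmn hK ih =>
      intro n cs L hu hv hplain
      cases hu
      exact absurd hv (fun hv => mgen_root_eq_of_v hirr hv hmn)

/-- Chains over the chopped node. -/
lemma mgen_chop_chain (hirr : Irreflexive lt) (htrans : Transitive lt)
    {u v : Term (HSig S) Empty} (h : MGen lt u v) :
    ∀ n cs L α extras rest, u = Term.app (n, Mark3.ul) cs →
    v = Term.app (n, Mark3.plain) L →
    cs.Perm (extras ++ rest) → (∀ b ∈ extras, ULLeafLt lt α b) →
    (∀ x ∈ rest, PlainTerm x) →
    ∃ smalls, (∀ w ∈ smalls, SmallTree lt α w) ∧ LEq L (smalls ++ rest) := by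
  induction h with
  | refl h1 h2 =>
      intro n cs L α extras rest hu hv hperm hex hpl
      subst hu; exact absurd h2 (fun hp => mgen_ul_refl_false h1 hp)
  | nodeNil n' =>
      intro n cs L α extras rest hu hv hperm hex hpl
      cases hu; cases hv
      obtain ⟨he, hr⟩ := List.append_eq_nil_iff.mp hperm.nil_eq.symm
      subst he; subst hr
      exact ⟨[], by simp, LEq.refl []⟩
  | @nodePlain n' cs' cs₂ L₀ c c' hp hpl hce sub ih =>
      intro n cs L α extras rest hu hv hperm hex hplain
      cases hu; cases hv
      have hext : ∃ rest', rest.Perm (c :: rest') ∧ cs₂.Perm (extras ++ rest') := by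
        refine perm_extract_of_pred (P := fun b => ¬ PlainTerm b) (hp.symm.trans hperm)
          (fun a ha => ?_) (fun hc => hc hpl)
        obtain ⟨β, _, rfl⟩ := hex a ha
        exact not_plain_ul
      obtain ⟨rest', hre, hcs₂⟩ := hext
      have hrest'pl : ∀ x ∈ rest', PlainTerm x := fun x hx =>
        hplain x (mem_of_perm_right hre (List.mem_cons_of_mem _ hx))
      obtain ⟨smalls, hsm, hleq⟩ := ih n' cs₂ L₀ α extras rest' rfl rfl hcs₂ hex hrest'pl
      refine ⟨smalls, hsm, ?_⟩
      have h1 : LEq (c' :: L₀) (c :: (smalls ++ rest')) := LEq.cons hce.symm hleq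
      refine h1.perm_right ?_
      exact (List.perm_middle.symm).trans ((hre.symm).append_left smalls)
  | @nodeUL n' m' cs' cs₂ L₀ K' xs' hp hK' sub ihK ih =>
      intro n cs L α extras rest hu hv hperm hex hplain
      cases hu; cases hv
      have hperm2 : (Term.app (m', Mark3.ul) xs' :: cs₂).Perm (rest ++ extras) :=
        (hp.symm.trans hperm).trans List.perm_append_comm
      obtain ⟨extras', hee, hcs₂⟩ := perm_extract_of_pred hperm2 hplain not_plain_ul
      have hmem : Term.app (m', Mark3.ul) xs' ∈ extras :=
        mem_of_perm_right hee (by simp)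
      obtain ⟨β, hβ, heq⟩ := hex _ hmem
      have hsmallK : ∀ w ∈ K', SmallTree lt α w := by
        intro w hw
        exact mgen_ulleaf_small htrans (hK' w hw) β α heq hβ
      have hex' : ∀ b ∈ extras', ULLeafLt lt α b := by
        intro b hb
        exact hex b (mem_of_perm_right hee (List.mem_cons_of_mem _ hb))
      obtain ⟨smalls, hsm, hleq⟩ := ih n' cs₂ L₀ α extras' rest rfl rfl
        (hcs₂.trans List.perm_append_comm) hex' hplain
      refine ⟨K' ++ smalls, ?_, ?_⟩
      · intro w hw
        rcases List.mem_append.mp hw with hw' | hw'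
        · exact hsmallK w hw'
        · exact hsm w hw'
      · rw [List.append_assoc]
        exact LEq.append (LEq.refl K') hleq
  | @up n' m' K cs' hmn hK ih =>
      intro n cs L α extras rest hu hv hperm hex hplain
      cases hu
      exact absurd hv (fun hv => mgen_root_eq_of_v hirr hv hmn)

/-- Chains over a lifted node. -/
lemma mgen_lift_chain (hirr : Irreflexive lt) {u v : Term (HSig S) Empty}
    (h : MGen lt u v) :
    ∀ n cs L cd rest, u = Term.app (n, Mark3.ul) cs →
    v = Term.app (n, Mark3.plain) L →
    cs.Perm (cd :: rest) → (∀ x ∈ rest, PlainTerm x) →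
    (∃ m xs, cd = Term.app (m, Mark3.ul) xs) →
    ∃ K, (∀ w ∈ K, MGen lt cd w) ∧ LEq L (K ++ rest) := by
  induction h with
  | refl h1 h2 =>
      intro n cs L cd rest hu hv hperm hpl hul
      subst hu; exact absurd h2 (fun hp => mgen_ul_refl_false h1 hp)
  | nodeNil n' =>
      intro n cs L cd rest hu hv hperm hpl hul
      cases hu
      exact absurd hperm.nil_eq (by simp)
  | @nodePlain n' cs' cs₂ L₀ c c' hp hpl hce sub ih =>
      intro n cs L cd rest hu hv hperm hplain hul
      cases hu; cases hv
      have hcne : c ≠ cd := by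
        rintro rfl
        obtain ⟨m, xs, rfl⟩ := hul
        exact not_plain_ul hpl
      rcases perm_cons_cases hp hperm with ⟨heq, _⟩ | ⟨r, hr1, hr2⟩
      · exact absurd heq hcne
      · have hrpl : ∀ x ∈ r, PlainTerm x := fun x hx =>
          hplain x (mem_of_perm_right hr2 (List.mem_cons_of_mem _ hx))
        obtain ⟨K, hKg, hleq⟩ := ih n' cs₂ L₀ cd r rfl rfl hr1 hrpl hul
        refine ⟨K, hKg, ?_⟩
        have h1 : LEq (c' :: L₀) (c :: (K ++ r)) := LEq.cons hce.symm hleq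
        refine h1.perm_right ?_
        exact (List.perm_middle.symm).trans ((hr2.symm).append_left K)
  | @nodeUL n' m' cs' cs₂ L₀ K' xs' hp hK' sub ihK ih =>
      intro n cs L cd rest hu hv hperm hplain hul
      cases hu; cases hv
      by_cases he : Term.app (m', Mark3.ul) xs' = cd
      · have hcs₂ : cs₂.Perm rest := by
          rcases perm_cons_cases hp hperm with ⟨_, hpe⟩ | ⟨r, hr1, hr2⟩
          · exact hpe
          · exfalso
            have : Term.app (m', Mark3.ul) xs' ∈ rest :=
              mem_of_perm_right hr2 (by simp)
            exact not_plain_ul (hplain _ this)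
        have hplainchain := mgen_plain_chain hirr sub n' cs₂ L₀ rfl rfl
          (fun x hx => hplain x (mem_of_perm_right hcs₂.symm hx))
        refine ⟨K', fun w hw => he ▸ hK' w hw, ?_⟩
        exact LEq.append (LEq.refl K') (hplainchain.perm_right hcs₂)
      · exfalso
        rcases perm_cons_cases hp hperm with ⟨heq, _⟩ | ⟨r, hr1, hr2⟩
        · exact he heq
        · have : Term.app (m', Mark3.ul) xs' ∈ rest :=
            mem_of_perm_right hr2 (by simp)
          exact not_plain_ul (hplain _ this)
  | @up n' m' K cs' hmn hK ih =>
      intro n cs L cd rest hu hv hperm hplain hul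
      cases hu
      exact absurd hv (fun hv => mgen_root_eq_of_v hirr hv hmn)

end Key1

section Key2

variable {S : Type} {lt : S → S → Prop}

lemma forall₂_swap {α : Type*} {R : α → α → Prop} {l₁ l₂ : List α}
    (h : List.Forall₂ (fun a b => R b a) l₁ l₂) : List.Forall₂ R l₂ l₁ := by
  induction h with
  | nil => exact List.Forall₂.nil
  | cons h hl ih => exact List.Forall₂.cons h ih

lemma chopped_mid (hirr : Irreflexive lt) (htrans : Transitive lt) {n α : SBot S}
    {rest extras cs₀ : List (Term (HSig S) Empty)}
    (hp1 : cs₀.Perm (Term.app (α, Mark3.plain) [] :: rest))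
    (hex : ∀ b ∈ extras, ULLeafLt lt α b)
    (hrestpl : ∀ x ∈ rest, PlainTerm x)
    {u v : Term (HSig S) Empty} (hv : MGen lt u v) :
    ∀ cs, u = Term.app (n, Mark3.ul) cs → cs.Perm (extras ++ rest) →
    ∃ v', TermEquiv v v' ∧ Mid lt (Term.app (n, Mark3.plain) cs₀) v' := by
  induction hv with
  | refl h1 h2 =>
      intro cs hu hp2
      subst hu; exact absurd h2 (fun hp => mgen_ul_refl_false h1 hp)
  | nodeNil n =>
      intro cs hu hp2
      cases hu
      obtain ⟨smalls, hsm, hleq⟩ := mgen_chop_chain hirr htrans (MGen.nodeNil n)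
        n [] [] α extras rest rfl rfl hp2 hex hrestpl
      exact ⟨_, TermEquiv.of_LEq _ hleq, Mid.chop hp1 hsm (List.Perm.refl _)⟩
  | @nodePlain n cs' cs₂ L₀ c c' hp hpl hce sub ih =>
      intro cs hu hp2
      cases hu
      obtain ⟨smalls, hsm, hleq⟩ := mgen_chop_chain hirr htrans
        (MGen.nodePlain hp hpl hce sub) n cs' _ α extras rest rfl rfl hp2 hex hrestpl
      exact ⟨_, TermEquiv.of_LEq _ hleq, Mid.chop hp1 hsm (List.Perm.refl _)⟩
  | @nodeUL n m' cs' cs₂ L₀ K' xs' hp hK' sub ihK ih =>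
      intro cs hu hp2
      cases hu
      obtain ⟨smalls, hsm, hleq⟩ := mgen_chop_chain hirr htrans
        (MGen.nodeUL hp hK' sub) n cs' _ α extras rest rfl rfl hp2 hex hrestpl
      exact ⟨_, TermEquiv.of_LEq _ hleq, Mid.chop hp1 hsm (List.Perm.refl _)⟩
  | @up n m' K cs' hmn hK ih =>
      intro cs hu hp2
      cases hu
      obtain ⟨K', hQ, hF⟩ := list_choice (fun w hw =>
        (ih w hw cs' rfl hp2).imp (fun v' ⟨h1, h2⟩ => ⟨h2, h1⟩))
      exact ⟨Term.app (m', Mark3.plain) K',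
        TermEquiv.of_LEq _ (LEq.of_forall₂ (forall₂_swap hF)), Mid.up hmn hQ⟩

lemma lifted_mid (hirr : Irreflexive lt) {n : SBot S} {c cd : Term (HSig S) Empty}
    {rest cs₀ : List (Term (HSig S) Empty)}
    (hp1 : cs₀.Perm (c :: rest))
    (hul : ∃ m xs, cd = Term.app (m, Mark3.ul) xs)
    (hrestpl : ∀ x ∈ rest, PlainTerm x)
    (hcsp : SPlainTerm c)
    (hT : ∀ w, MGen lt cd w → ∃ w', TermEquiv w w' ∧ Mid lt c w')
    {u v : Term (HSig S) Empty} (hv : MGen lt u v) :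
    ∀ cs, u = Term.app (n, Mark3.ul) cs → cs.Perm (cd :: rest) →
    ∃ v', TermEquiv v v' ∧ Mid lt (Term.app (n, Mark3.plain) cs₀) v' := by
  induction hv with
  | refl h1 h2 =>
      intro cs hu hp2
      subst hu; exact absurd h2 (fun hp => mgen_ul_refl_false h1 hp)
  | nodeNil n =>
      intro cs hu hp2
      cases hu
      exact absurd hp2.nil_eq (by simp)
  | @nodePlain n cs' cs₂ L₀ c₁ c₁' hp hpl hce sub ih =>
      intro cs hu hp2
      cases hu
      obtain ⟨K, hKg, hleq⟩ := mgen_lift_chain hirr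
        (MGen.nodePlain hp hpl hce sub) n cs' _ cd rest rfl rfl hp2 hrestpl hul
      obtain ⟨K', hQ, hF⟩ := list_choice (fun w hw =>
        (hT w (hKg w hw)).imp (fun v' ⟨h1, h2⟩ => ⟨h2, h1⟩))
      obtain ⟨fc, ys, rfl⟩ := Term.exists_app c
      obtain ⟨g, mkc⟩ := fc
      have hmkc : mkc = Mark3.plain := (splain_app_inv hcsp).1.1
      subst hmkc
      refine ⟨Term.app (n, Mark3.plain) (K' ++ rest), ?_, Mid.spine hQ hp1 (List.Perm.refl _)⟩
      refine (TermEquiv.of_LEq _ hleq).trans ?_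
      exact TermEquiv.of_LEq _ (LEq.append (LEq.of_forall₂ (forall₂_swap hF)) (LEq.refl rest))
  | @nodeUL n m' cs' cs₂ L₀ K₁ xs' hp hK₁ sub ihK ih =>
      intro cs hu hp2
      cases hu
      obtain ⟨K, hKg, hleq⟩ := mgen_lift_chain hirr
        (MGen.nodeUL hp hK₁ sub) n cs' _ cd rest rfl rfl hp2 hrestpl hul
      obtain ⟨K', hQ, hF⟩ := list_choice (fun w hw =>
        (hT w (hKg w hw)).imp (fun v' ⟨h1, h2⟩ => ⟨h2, h1⟩))
      obtain ⟨fc, ys, rfl⟩ := Term.exists_app c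
      obtain ⟨g, mkc⟩ := fc
      have hmkc : mkc = Mark3.plain := (splain_app_inv hcsp).1.1
      subst hmkc
      refine ⟨Term.app (n, Mark3.plain) (K' ++ rest), ?_, Mid.spine hQ hp1 (List.Perm.refl _)⟩
      refine (TermEquiv.of_LEq _ hleq).trans ?_
      exact TermEquiv.of_LEq _ (LEq.append (LEq.of_forall₂ (forall₂_swap hF)) (LEq.refl rest))
  | @up n m' K cs' hmn hK ih =>
      intro cs hu hp2
      cases hu
      obtain ⟨K', hQ, hF⟩ := list_choice (fun w hw =>
        (ih w hw cs' rfl hp2).imp (fun v' ⟨h1, h2⟩ => ⟨h2, h1⟩))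
      exact ⟨Term.app (m', Mark3.plain) K',
        TermEquiv.of_LEq _ (LEq.of_forall₂ (forall₂_swap hF)), Mid.up hmn hQ⟩

lemma postf_mgen_mid (hirr : Irreflexive lt) (htrans : Transitive lt)
    {s u : Term (HSig S) Empty} (hpf : PostF lt s u) :
    SPlainTerm s → ∀ v, MGen lt u v → ∃ v', TermEquiv v v' ∧ Mid lt s v' := by
  induction hpf with
  | @chopped n α rest extras cs₀ cs hp1 hex hp2 =>
      intro hsp v hv
      have hrestpl : ∀ x ∈ rest, PlainTerm x := fun x hx =>
        splain_plain ((splain_app_inv hsp).2 x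
          (mem_of_perm_right hp1 (List.mem_cons_of_mem _ hx)))
      exact chopped_mid hirr htrans hp1 hex hrestpl hv cs rfl hp2
  | @lifted n c c' rest cs₀ cs hsub hp1 hp2 ih =>
      intro hsp v hv
      have hcsp : SPlainTerm c :=
        (splain_app_inv hsp).2 c (mem_of_perm_right hp1 (List.mem_cons_self))
      have hrestpl : ∀ x ∈ rest, PlainTerm x := fun x hx =>
        splain_plain ((splain_app_inv hsp).2 x
          (mem_of_perm_right hp1 (List.mem_cons_of_mem _ hx)))
      exact lifted_mid hirr hp1 (postf_rhs_ul hsub) hrestpl hcsp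
        (fun w hw => ih hcsp w hw) hv cs rfl hp2

end Key2

section Part2

variable {S : Type} {lt : S → S → Prop}

def plugTree (f : HSig S) (pre post : List (Term (HSig S) Empty)) :
    Tree (HSig S) Empty → Tree (HSig S) Empty :=
  Quotient.lift (fun t => Tree.mk (Term.app f (pre ++ t :: post)))
    (fun a b h => Quotient.sound (TermEquiv.ctx f pre post h))

lemma plugTree_mk (f : HSig S) (pre post : List (Term (HSig S) Empty))
    (t : Term (HSig S) Empty) :
    plugTree f pre post (Tree.mk t) = Tree.mk (Term.app f (pre ++ t :: post)) := rfl

lemma treeRel_plug {R : Term (HSig S) Empty → Term (HSig S) Empty → Prop}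
    {x y : Tree (HSig S) Empty} (h : TreeRel R x y) (f : HSig S)
    (pre post : List (Term (HSig S) Empty)) :
    TreeRel R (plugTree f pre post x) (plugTree f pre post y) := by
  obtain ⟨p, q, rfl, rfl, hrw⟩ := h
  exact ⟨Term.app f (pre ++ p :: post), Term.app f (pre ++ q :: post), rfl, rfl,
    Rewrite.congr f pre post hrw⟩

lemma rtg_plug {R : Term (HSig S) Empty → Term (HSig S) Empty → Prop}
    {x y : Tree (HSig S) Empty} (h : Relation.ReflTransGen (TreeRel R) x y) (f : HSig S)
    (pre post : List (Term (HSig S) Empty)) :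
    Relation.ReflTransGen (TreeRel R) (plugTree f pre post x) (plugTree f pre post y) := by
  induction h with
  | refl => exact Relation.ReflTransGen.refl
  | tail _ hstep ih => exact ih.tail (treeRel_plug hstep f pre post)

lemma rtg_children {R : Term (HSig S) Empty → Term (HSig S) Empty → Prop} (f : HSig S) :
    ∀ {as bs : List (Term (HSig S) Empty)},
    List.Forall₂ (fun a b =>
      Relation.ReflTransGen (TreeRel R) (Tree.mk a) (Tree.mk b)) as bs →
    ∀ pre, Relation.ReflTransGen (TreeRel R)
      (Tree.mk (Term.app f (pre ++ as))) (Tree.mk (Term.app f (pre ++ bs))) := by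
  intro as bs h
  induction h with
  | nil => intro pre; exact Relation.ReflTransGen.refl
  | @cons a b l1 l2 hab hl ih =>
      intro pre
      have step1 : Relation.ReflTransGen (TreeRel R)
          (Tree.mk (Term.app f (pre ++ a :: l1))) (Tree.mk (Term.app f (pre ++ b :: l1))) := by
        have := rtg_plug hab f pre l1
        simpa [plugTree_mk] using this
      refine step1.trans ?_
      have := ih (pre ++ [b])
      simpa [List.append_assoc] using this

lemma forall₂_replicate {β : Type*} {P : β → β → Prop} {x : β} {l : List β}
    (h : ∀ b ∈ l, P x b) : List.Forall₂ P (List.replicate l.length x) l := by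
  induction l with
  | nil => exact List.Forall₂.nil
  | cons b l ih =>
      exact List.Forall₂.cons (h b (List.mem_cons_self))
        (ih (fun b' hb' => h b' (List.mem_cons_of_mem _ hb')))

lemma mk_perm {f : HSig S} {cs cs' : List (Term (HSig S) Empty)} (h : cs.Perm cs') :
    Tree.mk (Term.app f cs) = Tree.mk (Term.app f cs') :=
  Quotient.sound (TermEquiv.of_perm f h)

lemma small_star {α : SBot S} {w : Term (HSig S) Empty} (hst : SmallTree lt α w) :
    Relation.ReflTransGen (TreeRel (StarHRoot lt))
      (Tree.mk (Term.app (α, Mark3.star) [])) (Tree.mk w) := by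
  induction hst with
  | mk γ ts hγ hts ih =>
      refine Relation.ReflTransGen.head
        ⟨_, _, rfl, rfl, Rewrite.root (StarHRoot.copy α γ ts.length [] hγ)⟩ ?_
      have hF : List.Forall₂ (fun a b =>
          Relation.ReflTransGen (TreeRel (StarHRoot lt)) (Tree.mk a) (Tree.mk b))
          (List.replicate ts.length (Term.app (α, Mark3.star) [])) ts :=
        forall₂_replicate ih
      simpa using rtg_children (γ, Mark3.plain) hF []

lemma forall₂_rtg_refl {R : Term (HSig S) Empty → Term (HSig S) Empty → Prop}
    (l : List (Term (HSig S) Empty)) :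
    List.Forall₂ (fun a b =>
      Relation.ReflTransGen (TreeRel R) (Tree.mk a) (Tree.mk b)) l l := by
  induction l with
  | nil => exact List.Forall₂.nil
  | cons a l ih => exact List.Forall₂.cons Relation.ReflTransGen.refl ih

lemma mid_star {s v : Term (HSig S) Empty} (hmid : Mid lt s v) :
    Relation.ReflTransGen (TreeRel (StarHRoot lt))
      (Tree.mk (rootStar s)) (Tree.mk v) := by
  induction hmid with
  | @chop n α rest extras cs₀ cs hp1 hex hp2 =>
      have heq1 : Tree.mk (rootStar (Term.app (n, Mark3.plain) cs₀)) =
          Tree.mk (Term.app (n, Mark3.star) (Term.app (α, Mark3.plain) [] :: rest)) :=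
        mk_perm hp1
      rw [heq1]
      refine Relation.ReflTransGen.head
        ⟨_, _, rfl, rfl, Rewrite.root (StarHRoot.down n α extras.length [] [] rest)⟩ ?_
      have hF := List.rel_append (forall₂_replicate (fun b hb => small_star (hex b hb)))
        (forall₂_rtg_refl (R := StarHRoot lt) rest)
      have hsteps := rtg_children (n, Mark3.plain) hF []
      simp only [List.nil_append] at hsteps ⊢
      refine hsteps.trans ?_
      rw [mk_perm hp2.symm]
  | @spine n g ys K rest cs₀ cs hK hp1 hp2 ihK =>
      have heq1 : Tree.mk (rootStar (Term.app (n, Mark3.plain) cs₀)) =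
          Tree.mk (Term.app (n, Mark3.star) (Term.app (g, Mark3.plain) ys :: rest)) :=
        mk_perm hp1
      rw [heq1]
      refine Relation.ReflTransGen.head
        ⟨_, _, rfl, rfl, Rewrite.root (StarHRoot.down n g K.length [] ys rest)⟩ ?_
      have hF := List.rel_append (forall₂_replicate (P := fun a b =>
          Relation.ReflTransGen (TreeRel (StarHRoot lt)) (Tree.mk a) (Tree.mk b))
          (fun b hb => ihK b hb))
        (forall₂_rtg_refl (R := StarHRoot lt) rest)
      have hsteps := rtg_children (n, Mark3.plain) hF []
      simp only [List.nil_append] at hsteps ⊢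
      refine hsteps.trans ?_
      rw [mk_perm hp2.symm]
  | @up n m K cs₀ hmn hK ihK =>
      refine Relation.ReflTransGen.head
        ⟨_, _, rfl, rfl, Rewrite.root (StarHRoot.copy n m K.length cs₀ hmn)⟩ ?_
      have hF := forall₂_replicate (P := fun a b =>
          Relation.ReflTransGen (TreeRel (StarHRoot lt)) (Tree.mk a) (Tree.mk b))
          (fun b hb => ihK b hb)
      have hsteps := rtg_children (m, Mark3.plain) hF []
      simpa [rootStar] using hsteps

end Part2

section WaivePhase

variable {S : Type} {lt : S → S → Prop}

def treeDropUL : Tree (HSig S) Empty → Tree (HSig S) Empty :=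
  Quotient.lift (fun t => Tree.mk (dropUnderline t))
    (fun a b h => Quotient.sound (te_dropUL h))

lemma treeDropUL_mk (t : Term (HSig S) Empty) :
    treeDropUL (Tree.mk t) = Tree.mk (dropUnderline t) := rfl

lemma waive_treeDropUL {x y : Tree (HSig S) Empty} (h : TreeRel WaiveRoot x y) :
    treeDropUL x = treeDropUL y := by
  obtain ⟨p, q, rfl, rfl, hrw⟩ := h
  simp only [treeDropUL_mk]
  rw [waive_dropUL hrw]

lemma waive_rtg_treeDropUL {x y : Tree (HSig S) Empty}
    (h : Relation.ReflTransGen (TreeRel WaiveRoot) x y) :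
    treeDropUL x = treeDropUL y := by
  induction h with
  | refl => rfl
  | tail _ hstep ih => exact ih.trans (waive_treeDropUL hstep)

end WaivePhase

/-- The Star Hydra is simulated by the star game: `→_SH ⊆ ▷⁺`, where `▷` is the
`Star` rewrite relation over the signature `S' = S ∪ {⊥}` with the given
well-founded precedence `<` (extended by `⊥` below all elements of `S`).
That is, whenever `s →_SH t` for trees labeled over `S`, there is a nonempty
`▷` reduction from `s` to `t`. -/
theorem star_hydra_simulated_by_star
    {S : Type} (lt : S → S → Prop) (hirr : Irreflexive lt) (htrans : Transitive lt)
    (hwf : WellFounded lt)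
    (s t : Term (HSig S) Empty) (hs : SPlainTerm s) (ht : SPlainTerm t)
    (h : SHRel lt (Tree.mk s) (Tree.mk t)) :
    Relation.TransGen (TreeRel (StarHRoot lt)) (Tree.mk s) (Tree.mk t) := by
  classical
  obtain ⟨c, d, e, hchop, hpropmax, hwl, hwaivemax⟩ := h
  obtain ⟨p, q, hms, rfl, hrwchop⟩ := hchop
  have hps : SPlainTerm p := hs.equiv (Quotient.exact hms)
  have hpost0 : Post lt p q := chop_post hrwchop hps
  obtain ⟨hprop_rtg, hprop_nf⟩ := hpropmax
  -- propagate phase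
  have key1 : ∀ x : Tree (HSig S) Empty,
      Relation.ReflTransGen (TreeRel PropagateRoot) (Tree.mk q) x →
      ∃ s₁ u, Tree.mk s = Tree.mk s₁ ∧ SPlainTerm s₁ ∧ x = Tree.mk u ∧ Post lt s₁ u := by
    intro x hx
    induction hx with
    | refl => exact ⟨p, q, hms, hps, rfl, hpost0⟩
    | tail hrtg hstep ih =>
        obtain ⟨s₁, u, h1, h2, rfl, h4⟩ := ih
        obtain ⟨p₂, q₂, hmk2, rfl, hrw2⟩ := hstep
        have he : TermEquiv u p₂ := Quotient.exact hmk2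
        obtain ⟨s₂, hs₂e, hpost₂⟩ := h4.equiv he
        exact ⟨s₂, q₂, h1.trans (Quotient.sound hs₂e), h2.equiv hs₂e, rfl,
          post_step hrw2 s₂ (h2.equiv hs₂e) hpost₂⟩
  obtain ⟨s₁, ud, hmk_s₁, hsp₁, rfl, hpostd⟩ := key1 d hprop_rtg
  have hpf : PostF lt s₁ ud := post_nf hpostd hsp₁ hprop_nf
  have hshape : Shape ud := postf_shape hpf hsp₁
  -- widen/lengthen phase
  have key2 : ∀ x : Tree (HSig S) Empty,
      Relation.ReflTransGen
        (fun x y => TreeRel WidenRoot x y ∨ TreeRel (LengthenRoot lt) x y)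
        (Tree.mk ud) x →
      ∃ ue, x = Tree.mk ue ∧ Shape ue ∧
        ∀ v, MGen lt ue v → ∃ v', Tree.mk v = Tree.mk v' ∧ Mid lt s₁ v' := by
    intro x hx
    induction hx with
    | refl =>
        refine ⟨ud, rfl, hshape, fun v hv => ?_⟩
        obtain ⟨v', h1, h2⟩ := postf_mgen_mid hirr htrans hpf hsp₁ v hv
        exact ⟨v', Quotient.sound h1, h2⟩
    | tail hrtg hstep ih =>
        obtain ⟨u₁, rfl, hsh₁, hmid₁⟩ := ih
        rcases hstep with hstep | hstep
        · obtain ⟨p₂, q₂, hmk2, rfl, hrw2⟩ := hstep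
          have he : TermEquiv u₁ p₂ := Quotient.exact hmk2
          refine ⟨q₂, rfl, shape_widen hrw2 (hsh₁.equiv he), ?_⟩
          intro v hv
          obtain ⟨v₂, hch, hte⟩ := mgen_preserve_widen hirr hrw2 v hv
          have hch' : MGen lt u₁ v₂ := hch.equiv he.symm
          obtain ⟨v', h1, h2⟩ := hmid₁ v₂ hch'
          exact ⟨v', (Quotient.sound hte).symm.trans h1, h2⟩
        · obtain ⟨p₂, q₂, hmk2, rfl, hrw2⟩ := hstep
          have he : TermEquiv u₁ p₂ := Quotient.exact hmk2
          refine ⟨q₂, rfl, shape_lengthen hrw2 (hsh₁.equiv he), ?_⟩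
          intro v hv
          obtain ⟨v₂, hch, hte⟩ := mgen_preserve_lengthen hirr htrans hrw2 v hv
          have hch' : MGen lt u₁ v₂ := hch.equiv he.symm
          obtain ⟨v', h1, h2⟩ := hmid₁ v₂ hch'
          exact ⟨v', (Quotient.sound hte).symm.trans h1, h2⟩
  obtain ⟨ue, rfl, hshe, hmide⟩ := key2 e hwl
  -- waive phase
  obtain ⟨hwaive_rtg, _⟩ := hwaivemax
  have hdrop : Tree.mk (dropUnderline ue) = Tree.mk t := by
    have h9 := waive_rtg_treeDropUL hwaive_rtg
    simp only [treeDropUL_mk] at h9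
    rw [h9, dropUL_plain (splain_plain ht)]
  obtain ⟨v', h1, h2⟩ := hmide _ (mgen_dropUL hshe)
  have hstar := mid_star h2
  -- initial put step
  have hput : TreeRel (StarHRoot lt) (Tree.mk s) (Tree.mk (rootStar s₁)) := by
    obtain ⟨f₁, cs₁, rfl⟩ := Term.exists_app s₁
    obtain ⟨g₁, mk₁⟩ := f₁
    have hmk₁ : mk₁ = Mark3.plain := (splain_app_inv hsp₁).1.1
    subst hmk₁
    exact ⟨Term.app (g₁, Mark3.plain) cs₁, Term.app (g₁, Mark3.star) cs₁, hmk_s₁, rfl,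
      Rewrite.root (StarHRoot.put g₁ cs₁)⟩
  refine Relation.TransGen.head' hput ?_
  rw [← hdrop, h1]
  exact hstar

end StarGames
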